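/- arXiv:2305.14944 — 10 statements merged into one kernel-verified Lean document; each statement's English description precedes it below -/
import Mathlib

section
/- Let N ≥ 1 and let M be an N×N symmetric matrix with integer entries such that |M_{ij}| ≤ B for all i, j, where B ≥ 1 is a real number. Then every nonzero eigenvalue of M is bounded away from zero: for every real number λ ≠ 0 for which there exists a nonzero vector v ∈ ℝ^N with Mv = λv, one has |λ| ≥ (BN)^{-N}. -/
open Polynomial Matrix

/-- Evaluation of the characteristic polynomial. -/
lemma aux_eval_charpoly {n : ℕ} (M : Matrix (Fin n) (Fin n) ℝ) (t : ℝ) :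
    M.charpoly.eval t = (t • (1 : Matrix (Fin n) (Fin n) ℝ) - M).det := by
  rw [Matrix.charpoly, eval_det, Matrix.matPolyEquiv_charmatrix]
  congr 1
  rw [eval_sub, eval_X, eval_C]
  congr 1
  simp [Matrix.scalar, Matrix.smul_eq_diagonal_mul]

/-- det (t•1 - M) is the product of (t - eigenvalue). -/
lemma aux_det_eq_prod {n : ℕ} {M : Matrix (Fin n) (Fin n) ℝ} (hA : M.IsHermitian) (t : ℝ) :
    (t • (1 : Matrix (Fin n) (Fin n) ℝ) - M).det = ∏ i, (t - hA.eigenvalues i) := by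
  set U : Matrix (Fin n) (Fin n) ℝ := (hA.eigenvectorUnitary : Matrix (Fin n) (Fin n) ℝ) with hUdef
  have hU : U * star U = 1 := (Matrix.mem_unitaryGroup_iff).mp hA.eigenvectorUnitary.2
  set D : Matrix (Fin n) (Fin n) ℝ := Matrix.diagonal (RCLike.ofReal ∘ hA.eigenvalues) with hDdef
  have hspec : M = U * D * star U := hA.spectral_theorem
  have key : t • (1 : Matrix (Fin n) (Fin n) ℝ) - M = U * (t • 1 - D) * star U := by
    rw [hspec, Matrix.mul_sub, Matrix.sub_mul]
    congr 1
    rw [Matrix.mul_smul, Matrix.mul_one, Matrix.smul_mul, hU]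
  rw [key, Matrix.det_mul_right_comm, hU, one_mul]
  have : t • (1 : Matrix (Fin n) (Fin n) ℝ) - D
      = Matrix.diagonal (fun i => t - hA.eigenvalues i) := by
    ext i j
    by_cases h : i = j <;>
      simp [hDdef, Matrix.diagonal_apply, h, Matrix.one_apply, Matrix.smul_apply]
  rw [this, Matrix.det_diagonal]

/-- charpoly of a hermitian real matrix is the product of (X - C eigenvalue). -/
lemma aux_charpoly_eq_prod {n : ℕ} {M : Matrix (Fin n) (Fin n) ℝ} (hA : M.IsHermitian) :
    M.charpoly = ∏ i, (X - C (hA.eigenvalues i)) := by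
  apply Polynomial.funext
  intro t
  rw [aux_eval_charpoly, aux_det_eq_prod hA t, eval_prod]
  simp

/-- eigenvalue bound via row sums. -/
lemma aux_eig_bound {n : ℕ} (hn : 1 ≤ n) (M : Matrix (Fin n) (Fin n) ℝ) (B : ℝ)
    (hbd : ∀ i j, |M i j| ≤ B) (mu : ℝ) (v : Fin n → ℝ) (hv : v ≠ 0)
    (heq : M.mulVec v = mu • v) : |mu| ≤ B * n := by
  haveI : Nonempty (Fin n) := ⟨⟨0, hn⟩⟩
  obtain ⟨j, -, hj⟩ := Finset.exists_max_image Finset.univ (fun i => |v i|) Finset.univ_nonempty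
  have hvj : 0 < |v j| := by
    obtain ⟨i, hi⟩ := Function.ne_iff.mp hv
    exact lt_of_lt_of_le (abs_pos.mpr hi) (hj i (Finset.mem_univ i))
  have hrow : |mu| * |v j| ≤ B * n * |v j| := by
    have h1 : mu * v j = ∑ i, M j i * v i := by
      have := congrFun heq j
      simp only [Matrix.mulVec, dotProduct, Pi.smul_apply, smul_eq_mul] at this
      exact this.symm
    calc |mu| * |v j| = |mu * v j| := (abs_mul _ _).symm
      _ = |∑ i, M j i * v i| := by rw [h1]
      _ ≤ ∑ i, |M j i * v i| := Finset.abs_sum_le_sum_abs _ _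
      _ ≤ ∑ _i : Fin n, B * |v j| := by
          apply Finset.sum_le_sum
          intro i _
          rw [abs_mul]
          exact mul_le_mul (hbd j i) (hj i (Finset.mem_univ i)) (abs_nonneg _)
            (le_trans (abs_nonneg _) (hbd j i))
      _ = B * n * |v j| := by
          rw [Finset.sum_const, Finset.card_univ, Fintype.card_fin, nsmul_eq_mul]
          ring
  exact le_of_mul_le_mul_right hrow hvj

/-- every nonzero eigenvalue of a symmetric integer matrix with entries
bounded by `B` has absolute value at least `(B*N)^{-N}`. -/
theorem integer_matrix_eigenvalue_lower_bound
    (N : ℕ) (hN : 1 ≤ N)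
    (M : Matrix (Fin N) (Fin N) ℝ) (hsym : M.IsSymm)
    (hint : ∀ i j, ∃ z : ℤ, M i j = (z : ℝ))
    (B : ℝ) (hB : 1 ≤ B) (hbd : ∀ i j, |M i j| ≤ B) :
    ∀ lam : ℝ, lam ≠ 0 →
      (∃ v : Fin N → ℝ, v ≠ 0 ∧ M.mulVec v = lam • v) →
      ((B * N) ^ N)⁻¹ ≤ |lam| := by
  intro lam hlam ⟨v, hv, hMv⟩
  have hA : M.IsHermitian := by
    rw [Matrix.IsHermitian]
    ext i j
    rw [Matrix.conjTranspose_apply, star_trivial]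
    exact (congrFun (congrFun hsym i) j : M.transpose i j = M i j)
  set μ : Fin N → ℝ := hA.eigenvalues with hμ
  -- integer matrix
  choose M₀ hM₀ using hint
  have hMmap : M = (Matrix.of M₀).map ⇑(Int.castRingHom ℝ) := by
    ext i j; exact hM₀ i j
  have hBN : (1 : ℝ) ≤ B * N := by
    have : (1 : ℝ) ≤ (N : ℝ) := by exact_mod_cast hN
    nlinarith
  have hBNpos : (0 : ℝ) < B * N := lt_of_lt_of_le one_pos hBN
  -- each eigenvalue bounded
  have hμbd : ∀ i, |μ i| ≤ B * N := by
    intro i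
    refine aux_eig_bound hN M B hbd (μ i) _ ?_ (hA.mulVec_eigenvectorBasis i)
    intro h
    exact hA.eigenvectorBasis.orthonormal.ne_zero i (by ext k; exact congrFun h k)
  -- lam is an eigenvalue
  have hdet0 : (lam • (1 : Matrix (Fin N) (Fin N) ℝ) - M).det = 0 := by
    rw [← Matrix.exists_mulVec_eq_zero_iff]
    refine ⟨v, hv, ?_⟩
    rw [Matrix.sub_mulVec, hMv, Matrix.smul_mulVec, Matrix.one_mulVec]
    simp
  have hprod0 : ∏ i, (lam - μ i) = 0 := by rw [← aux_det_eq_prod hA lam, hdet0]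
  obtain ⟨j, -, hj⟩ := Finset.prod_eq_zero_iff.mp hprod0
  have hμj : μ j = lam := by linarith [sub_eq_zero.mp hj]
  -- the coefficient argument
  set S : Finset (Fin N) := Finset.univ.filter (fun i => ¬ μ i = 0) with hS
  set k : ℕ := (Finset.univ.filter (fun i => μ i = 0)).card with hk
  have hsplit : M.charpoly = X ^ k * ∏ i ∈ S, (X - C (μ i)) := by
    rw [aux_charpoly_eq_prod hA, ← Finset.prod_filter_mul_prod_filter_not Finset.univ
      (fun i => μ i = 0)]
    congr 1
    rw [Finset.prod_congr rfl (fun i hi => ?_), Finset.prod_const, hk]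
    · rw [Finset.mem_filter] at hi
      rw [show hA.eigenvalues i = 0 from hi.2, map_zero, sub_zero]
  have hcoeff : M.charpoly.coeff k = ∏ i ∈ S, (0 - μ i) := by
    rw [hsplit]
    have := Polynomial.coeff_X_pow_mul (∏ i ∈ S, (X - C (μ i))) k 0
    rw [zero_add] at this
    rw [this, Polynomial.coeff_zero_eq_eval_zero, eval_prod]
    simp
  have hne : M.charpoly.coeff k ≠ 0 := by
    rw [hcoeff]
    apply Finset.prod_ne_zero_iff.mpr
    intro i hi
    rw [hS, Finset.mem_filter] at hi
    simp only [zero_sub, ne_eq, neg_eq_zero]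
    exact hi.2
  -- coefficient is an integer
  have hint' : ∃ z : ℤ, (z : ℝ) = M.charpoly.coeff k := by
    refine ⟨(Matrix.of M₀).charpoly.coeff k, ?_⟩
    rw [hMmap, Matrix.charpoly_map (Matrix.of M₀) (Int.castRingHom ℝ), Polynomial.coeff_map]
    rfl
  obtain ⟨z, hz⟩ := hint'
  have hz0 : z ≠ 0 := by
    intro h; apply hne; rw [← hz, h]; simp
  have h1le : (1 : ℝ) ≤ |M.charpoly.coeff k| := by
    rw [← hz]
    rw [← Int.cast_abs]
    exact_mod_cast Int.one_le_abs hz0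
  -- bound the product
  have hjS : j ∈ S := by
    rw [hS, Finset.mem_filter]
    exact ⟨Finset.mem_univ j, by rw [hμj]; exact hlam⟩
  have hprodabs : |M.charpoly.coeff k| = ∏ i ∈ S, |μ i| := by
    rw [hcoeff, Finset.abs_prod]
    exact Finset.prod_congr rfl (fun i _ => by rw [zero_sub, abs_neg])
  have hkey : (1 : ℝ) ≤ |lam| * (B * N) ^ N := by
    calc (1 : ℝ) ≤ |M.charpoly.coeff k| := h1le
      _ = ∏ i ∈ S, |μ i| := hprodabs
      _ = |μ j| * ∏ i ∈ S.erase j, |μ i| := (Finset.mul_prod_erase S _ hjS).symm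
      _ ≤ |lam| * (B * N) ^ N := by
          rw [hμj]
          apply mul_le_mul_of_nonneg_left _ (abs_nonneg _)
          calc ∏ i ∈ S.erase j, |μ i| ≤ ∏ _i ∈ S.erase j, (B * N) :=
                Finset.prod_le_prod (fun i _ => abs_nonneg _) (fun i _ => hμbd i)
            _ = (B * N) ^ (S.erase j).card := by rw [Finset.prod_const]
            _ ≤ (B * N) ^ N := by
                apply pow_le_pow_right₀ hBN
                exact le_trans (Finset.card_le_card (Finset.erase_subset _ _))
                  (le_trans (Finset.card_le_univ S) (by simp))
  have hpow : (0 : ℝ) < (B * N) ^ N := pow_pos hBNpos N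
  rw [inv_eq_one_div, div_le_iff₀ hpow]
  linarith [hkey]
end

section
/- Let N ≥ 1, let M be an N×N symmetric real matrix, let C ≥ 1 be a positive integer such that the matrix C·M has integer entries, and let B ≥ 1 be a real number with |M_{ij}| ≤ B for all i, j. Then for every real number λ ≠ 0 for which there exists a nonzero vector v ∈ ℝ^N with Mv = λv, one has |λ| ≥ 1/(C·(C·B·N)^N). -/
open Polynomial Matrix

section Aux

variable {n R : Type*} [Fintype n] [DecidableEq n] [CommRing R]

private lemma my_conj_sub_smul (t : R) (U D V : Matrix n n R) (h1 : U * V = 1) :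
    U * (t • (1 : Matrix n n R) - D) * V = t • (1 : Matrix n n R) - U * D * V := by
  rw [mul_sub, sub_mul, mul_smul_comm, smul_mul_assoc, mul_one, h1]

private lemma my_det_conj (U X V : Matrix n n R) (h1 : U * V = 1) :
    (U * X * V).det = X.det := by
  rw [det_mul, det_mul, mul_comm (U.det), mul_assoc, ← det_mul, h1, det_one, mul_one]

private lemma my_scalar_eq (t : R) : Matrix.scalar n t = t • (1 : Matrix n n R) := by
  rw [scalar_apply, ← smul_one_eq_diagonal]

private lemma my_charpoly_conj (U D V : Matrix n n R) (h1 : U * V = 1) :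
    (U * D * V).charpoly = D.charpoly := by
  have h1' : (C : R →+* R[X]).mapMatrix U * (C : R →+* R[X]).mapMatrix V = 1 := by
    rw [← _root_.map_mul, h1, _root_.map_one]
  have key : charmatrix (U * D * V)
      = (C : R →+* R[X]).mapMatrix U * charmatrix D * (C : R →+* R[X]).mapMatrix V := by
    rw [charmatrix, charmatrix, my_scalar_eq, my_conj_sub_smul _ _ _ _ h1',
      _root_.map_mul, _root_.map_mul]
  rw [Matrix.charpoly, key, my_det_conj _ _ _ h1']
  rfl

private lemma my_eig_abs_le {N : ℕ} (A : Matrix (Fin N) (Fin N) ℝ) (K : ℝ)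
    (hK : ∀ i j, |A i j| ≤ K) {t : ℝ} {v : Fin N → ℝ} (hv : v ≠ 0)
    (h : A.mulVec v = t • v) : |t| ≤ K * N := by
  have hNpos : 0 < N := by
    rcases Nat.eq_zero_or_pos N with h0 | h0
    · subst h0; exact absurd (_root_.funext fun i => (Fin.elim0 i : v i = 0)) hv
    · exact h0
  obtain ⟨i0, -, hi0⟩ := Finset.exists_max_image Finset.univ (fun i => |v i|)
    ⟨⟨0, hNpos⟩, Finset.mem_univ _⟩
  have hvi0 : 0 < |v i0| := by
    rcases lt_or_ge 0 |v i0| with h' | h'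
    · exact h'
    · exact absurd (funext fun i => abs_nonpos_iff.mp ((hi0 i (Finset.mem_univ i)).trans h')) hv
  have key : |t| * |v i0| ≤ K * N * |v i0| := by
    have h1 : |t| * |v i0| = |(A.mulVec v) i0| := by
      rw [h]; simp [abs_mul]
    rw [h1, mulVec, dotProduct]
    calc |∑ j, A i0 j * v j| ≤ ∑ j, |A i0 j * v j| := Finset.abs_sum_le_sum_abs _ _
      _ ≤ ∑ _j : Fin N, K * |v i0| := by
          refine Finset.sum_le_sum fun j _ => ?_
          rw [abs_mul]
          exact mul_le_mul (hK i0 j) (hi0 j (Finset.mem_univ j)) (abs_nonneg _)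
            ((abs_nonneg _).trans (hK i0 i0))
      _ = K * N * |v i0| := by rw [Finset.sum_const, Finset.card_univ, Fintype.card_fin]; ring
  exact le_of_mul_le_mul_right key hvi0

end Aux

/-- if `C • M` has integer entries (`C ≥ 1` an integer) and the entries of the
symmetric matrix `M` are bounded by `B ≥ 1`, then every nonzero eigenvalue of `M`
has absolute value at least `1/(C·(C·B·N)^N)`. -/
theorem rational_matrix_eigenvalue_lower_bound
    (N : ℕ) (hN : 1 ≤ N)
    (M : Matrix (Fin N) (Fin N) ℝ) (hsym : M.IsSymm)
    (C : ℕ) (hC : 1 ≤ C)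
    (hint : ∀ i j, ∃ z : ℤ, (C : ℝ) * M i j = (z : ℝ))
    (B : ℝ) (hB : 1 ≤ B) (hbd : ∀ i j, |M i j| ≤ B) :
    ∀ lam : ℝ, lam ≠ 0 →
      (∃ v : Fin N → ℝ, v ≠ 0 ∧ M.mulVec v = lam • v) →
      1 / ((C : ℝ) * ((C : ℝ) * B * N) ^ N) ≤ |lam| := by
  classical
  intro lam hlam ⟨v, hv, hMv⟩
  have hC0 : (1 : ℝ) ≤ (C : ℝ) := by exact_mod_cast hC
  have hN0 : (1 : ℝ) ≤ (N : ℝ) := by exact_mod_cast hN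
  set A : Matrix (Fin N) (Fin N) ℝ := (C : ℝ) • M with hAdef
  -- A is hermitian
  have hA : A.IsHermitian := by
    rw [Matrix.IsHermitian, conjTranspose_eq_transpose_of_trivial, hAdef,
      Matrix.transpose_smul, hsym.eq]
  set ν : Fin N → ℝ := hA.eigenvalues with hν
  set U : Matrix (Fin N) (Fin N) ℝ := (hA.eigenvectorUnitary : Matrix (Fin N) (Fin N) ℝ) with hU
  have h1 : U * star U = 1 := (Matrix.mem_unitaryGroup_iff).mp hA.eigenvectorUnitary.2
  have hst : A = U * diagonal ν * star U := by
    have := hA.spectral_theorem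
    convert this using 2
    rw [Unitary.conjStarAlgAut_apply]
    rfl
  -- entry bound for A
  have hKA : ∀ i j, |A i j| ≤ (C : ℝ) * B := by
    intro i j
    rw [hAdef, Matrix.smul_apply, smul_eq_mul, abs_mul, abs_of_nonneg (by positivity : (0:ℝ) ≤ (C:ℝ))]
    exact mul_le_mul_of_nonneg_left (hbd i j) (by positivity)
  set K : ℝ := (C : ℝ) * B * N with hKdef
  have hK1 : (1 : ℝ) ≤ K := by
    calc (1:ℝ) = 1 * 1 * 1 := by ring
      _ ≤ (C : ℝ) * B * N := by
          apply mul_le_mul (mul_le_mul hC0 hB zero_le_one (by positivity)) hN0 zero_le_one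
          positivity
  -- eigenvalue bound
  have hνbd : ∀ i, |ν i| ≤ K := by
    intro i
    have heig := hA.mulVec_eigenvectorBasis i
    have hne : (⇑(hA.eigenvectorBasis i) : Fin N → ℝ) ≠ 0 := by
      intro hzero
      have hn1 := hA.eigenvectorBasis.orthonormal.1 i
      rw [show (hA.eigenvectorBasis i : EuclideanSpace ℝ (Fin N)) = 0 from (WithLp.ofLp_eq_zero (p := 2)).mp hzero] at hn1
      simp at hn1
    exact my_eig_abs_le A ((C : ℝ) * B) hKA hne heig
  -- A has eigenvalue C * lam with eigenvector v
  have hAv : A.mulVec v = ((C : ℝ) * lam) • v := by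
    rw [hAdef, smul_mulVec, hMv, smul_smul]
  -- det (C*lam • 1 - A) = 0
  have hdet0 : ((((C : ℝ) * lam) • (1 : Matrix (Fin N) (Fin N) ℝ)) - A).det = 0 := by
    rw [← Matrix.exists_mulVec_eq_zero_iff]
    refine ⟨v, hv, ?_⟩
    rw [sub_mulVec, smul_mulVec, one_mulVec, hAv, sub_self]
  -- det (t•1 - A) = ∏ (t - ν i)
  have hdetprod : ∀ t : ℝ, ((t • (1 : Matrix (Fin N) (Fin N) ℝ)) - A).det = ∏ i, (t - ν i) := by
    intro t
    have : (t • (1 : Matrix (Fin N) (Fin N) ℝ)) - A = U * (t • 1 - diagonal ν) * star U := by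
      rw [my_conj_sub_smul _ _ _ _ h1, ← hst]
    rw [this, my_det_conj _ _ _ h1]
    have : t • (1 : Matrix (Fin N) (Fin N) ℝ) - diagonal ν = diagonal (fun i => t - ν i) := by
      rw [smul_one_eq_diagonal, diagonal_sub]
    rw [this, det_diagonal]
  -- some eigenvalue equals C * lam
  obtain ⟨j, -, hj⟩ := Finset.prod_eq_zero_iff.mp ((hdetprod ((C : ℝ) * lam)).symm.trans hdet0)
  have hνj : ν j = (C : ℝ) * lam := by linarith [sub_eq_zero.mp hj]
  have hνjne : ν j ≠ 0 := by
    rw [hνj]; exact mul_ne_zero (by positivity) hlam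
  -- charpoly of A factors
  have hcp : A.charpoly = ∏ i, (X - Polynomial.C (ν i)) := by
    rw [hst, my_charpoly_conj _ _ _ h1,
      Matrix.charpoly_of_upperTriangular _ (Matrix.blockTriangular_diagonal ν)]
    simp
  -- charpoly of A has integer coefficients
  set A' : Matrix (Fin N) (Fin N) ℤ := fun i j => (hint i j).choose with hA'
  have hmap : A'.map (Int.cast : ℤ → ℝ) = A := by
    ext i j
    rw [Matrix.map_apply, hA', hAdef]
    exact ((hint i j).choose_spec).symm
  have hcpmap : A.charpoly = (A'.charpoly).map (Int.castRingHom ℝ) := by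
    rw [← Matrix.charpoly_map A' (Int.castRingHom ℝ)]
    congr 1
    exact hmap.symm
  -- split off zero eigenvalues
  set S : Finset (Fin N) := Finset.univ.filter (fun i => ν i ≠ 0) with hS
  set m : ℕ := (Finset.univ.filter (fun i => ¬ ν i ≠ 0)).card with hm
  have hsplit : (∏ i, (X - Polynomial.C (ν i)))
      = X ^ m * ∏ i ∈ S, (X - Polynomial.C (ν i)) := by
    rw [← Finset.prod_filter_mul_prod_filter_not Finset.univ (fun i => ¬ ν i ≠ 0)]
    congr 1
    · rw [← Finset.prod_const]
      refine Finset.prod_congr rfl fun i hi => ?_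
      have : ν i = 0 := not_not.mp (Finset.mem_filter.mp hi).2
      rw [this]; simp
    · rw [hS]
      exact Finset.prod_congr (by ext i; simp) (fun _ _ => rfl)
  -- the key coefficient
  have hcoeff : A.charpoly.coeff m = ∏ i ∈ S, (-ν i) := by
    rw [hcp, hsplit]
    have := Polynomial.coeff_X_pow_mul (∏ i ∈ S, (X - Polynomial.C (ν i))) m 0
    rw [zero_add] at this
    rw [this, Polynomial.coeff_zero_eq_eval_zero, Polynomial.eval_prod]
    refine Finset.prod_congr rfl fun i _ => ?_
    simp
  have hprodne : (∏ i ∈ S, (-ν i)) ≠ 0 := by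
    rw [Finset.prod_ne_zero_iff]
    intro i hi
    exact neg_ne_zero.mpr (Finset.mem_filter.mp hi).2
  -- integrality: the coefficient is a nonzero integer
  have hz : ((A'.charpoly.coeff m : ℤ) : ℝ) = ∏ i ∈ S, (-ν i) := by
    rw [← hcoeff, hcpmap, Polynomial.coeff_map]
    rfl
  have hzne : (A'.charpoly.coeff m : ℤ) ≠ 0 := by
    intro h0
    rw [h0] at hz
    exact hprodne (by exact_mod_cast hz.symm)
  have hone_le : (1 : ℝ) ≤ |∏ i ∈ S, (-ν i)| := by
    rw [← hz]
    exact_mod_cast Int.one_le_abs hzne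
  -- bound the product
  have hjS : j ∈ S := Finset.mem_filter.mpr ⟨Finset.mem_univ j, hνjne⟩
  have habs : |∏ i ∈ S, (-ν i)| = ∏ i ∈ S, |ν i| := by
    rw [Finset.abs_prod]
    exact Finset.prod_congr rfl fun i _ => abs_neg _
  have hprodbd : ∏ i ∈ S, |ν i| ≤ |ν j| * K ^ N := by
    rw [← Finset.prod_erase_mul S _ hjS, mul_comm]
    refine mul_le_mul_of_nonneg_left ?_ (abs_nonneg _)
    calc ∏ i ∈ S.erase j, |ν i| ≤ ∏ _i ∈ S.erase j, K :=
          Finset.prod_le_prod (fun i _ => abs_nonneg _) (fun i _ => hνbd i)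
      _ = K ^ (S.erase j).card := Finset.prod_const K
      _ ≤ K ^ N := pow_le_pow_right₀ (by linarith) (le_trans (Finset.card_le_card
            (Finset.subset_univ _)) (by simp))
  have hfinal : (1 : ℝ) ≤ ((C : ℝ) * |lam|) * K ^ N := by
    have : |ν j| = (C : ℝ) * |lam| := by
      rw [hνj, abs_mul, abs_of_nonneg (by positivity : (0:ℝ) ≤ (C:ℝ))]
    calc (1 : ℝ) ≤ |∏ i ∈ S, (-ν i)| := hone_le
      _ = ∏ i ∈ S, |ν i| := habs
      _ ≤ |ν j| * K ^ N := hprodbd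
      _ = ((C : ℝ) * |lam|) * K ^ N := by rw [this]
  -- conclude
  have hKpow : (0 : ℝ) < (C : ℝ) * K ^ N := by positivity
  rw [div_le_iff₀ hKpow]
  nlinarith [hfinal, abs_nonneg lam]
end

section
/- Let n, t ≥ 1, let L : ℝ[x_1,…,x_n] → ℝ be a linear functional, let B ≥ 1 be a real number and C ≥ 1 an integer such that for every α ∈ ℕ^n with |α| ≤ 2t one has |L(x^α)| ≤ B and C·L(x^α) ∈ ℤ. Let N be the number of exponents α ∈ ℕ^n with |α| ≤ t, and let M_t(L) be the moment matrix of L. Then for every real number λ ≠ 0 for which there exists a nonzero vector v (indexed by exponents of degree ≤ t) with M_t(L)·v = λv, one has |λ| ≥ 1/(C·(C·B·N)^N). -/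
section Aux
open Polynomial

lemma aux_eval_charpoly_s2 {m : Type*} [Fintype m] [DecidableEq m] {K : Type*} [CommRing K]
    (A : Matrix m m K) (μ : K) :
    A.charpoly.eval μ = (Matrix.scalar m μ - A).det := by
  rw [Matrix.charpoly, eval_det, Matrix.matPolyEquiv_charmatrix]
  simp

lemma aux_root_of_eigen {m : Type*} [Fintype m] [DecidableEq m] {K : Type*} [Field K]
    (A : Matrix m m K) (μ : K) (w : m → K) (hw : w ≠ 0) (h : A.mulVec w = μ • w) :
    A.charpoly.eval μ = 0 := by
  rw [aux_eval_charpoly_s2, ← Matrix.exists_mulVec_eq_zero_iff]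
  refine ⟨w, hw, ?_⟩
  rw [Matrix.sub_mulVec, h]
  ext i
  simp [Matrix.mulVec_diagonal, Matrix.scalar]

lemma aux_root_bound {m : Type*} [Fintype m] [DecidableEq m] [Nonempty m]
    (A : Matrix m m ℂ) (r : ℂ) (h : A.charpoly.eval r = 0) (b : ℝ)
    (hb : ∀ i j, ‖A i j‖ ≤ b) :
    ‖r‖ ≤ (Fintype.card m : ℝ) * b := by
  rw [aux_eval_charpoly_s2] at h
  obtain ⟨w, hw, hmul⟩ := Matrix.exists_mulVec_eq_zero_iff.2 h
  obtain ⟨i, -, hi⟩ := Finset.exists_max_image Finset.univ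
    (fun i => ‖w i‖) Finset.univ_nonempty
  have hwi : 0 < ‖w i‖ := by
    rcases Function.ne_iff.1 hw with ⟨j, hj⟩
    exact lt_of_lt_of_le (by simpa using hj) (hi j (Finset.mem_univ j))
  have hrw : r * w i = ∑ j, A i j * w j := by
    have := congrFun hmul i
    simp only [Matrix.sub_mulVec, Pi.sub_apply, Pi.zero_apply, sub_eq_zero] at this
    have h2 : (Matrix.scalar m r).mulVec w i = r * w i := by
      simp [Matrix.scalar, Matrix.mulVec_diagonal]
    rw [← h2, this]
    rfl
  have : ‖r‖ * ‖w i‖ ≤ (Fintype.card m : ℝ) * b * ‖w i‖ := by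
    calc ‖r‖ * ‖w i‖ = ‖∑ j, A i j * w j‖ := by
            rw [← norm_mul, hrw]
      _ ≤ ∑ j, ‖A i j * w j‖ := by
            exact norm_sum_le _ _
      _ ≤ ∑ _j : m, b * ‖w i‖ := by
            apply Finset.sum_le_sum
            intro j _
            rw [norm_mul]
            exact mul_le_mul (hb i j) (hi j (Finset.mem_univ j)) (by positivity) 
              (le_trans (by positivity) (hb i j))
      _ = (Fintype.card m : ℝ) * b * ‖w i‖ := by
            rw [Finset.sum_const, Finset.card_univ, nsmul_eq_mul, mul_assoc]
  exact le_of_mul_le_mul_right this hwi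

lemma aux_prod_le {b : ℝ} (hb : 0 ≤ b) (s : Multiset ℝ)
    (h : ∀ x ∈ s, 0 ≤ x ∧ x ≤ b) : s.prod ≤ b ^ Multiset.card s := by
  induction s using Multiset.induction with
  | empty => simp
  | cons a s ih =>
    simp only [Multiset.prod_cons, Multiset.card_cons, pow_succ]
    have ha := h a (Multiset.mem_cons_self a s)
    have hs : ∀ x ∈ s, 0 ≤ x ∧ x ≤ b := fun x hx => h x (Multiset.mem_cons_of_mem hx)
    have hsnn : 0 ≤ s.prod := Multiset.prod_nonneg (fun x hx => (hs x hx).1)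
    calc a * s.prod ≤ b * b ^ Multiset.card s :=
          mul_le_mul ha.2 (ih hs) hsnn hb
      _ = b ^ Multiset.card s * b := mul_comm _ _

lemma aux_main {m : Type*} [Fintype m] [DecidableEq m] [Nonempty m]
    (M : Matrix m m ℝ) (Zm : Matrix m m ℤ) (Cr B : ℝ) (hCr : 1 ≤ Cr) (hB : 1 ≤ B)
    (hmap : Zm.map (Int.cast : ℤ → ℝ) = Cr • M)
    (hent : ∀ i j, |(Zm i j : ℝ)| ≤ Cr * B)
    (N : ℕ) (hN : N = Fintype.card m) (hN1 : 1 ≤ N)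
    (lam : ℝ) (hlam : lam ≠ 0) (v : m → ℝ) (hv : v ≠ 0) (hmul : M.mulVec v = lam • v) :
    1 / (Cr * (Cr * B * N) ^ N) ≤ |lam| := by
  have hCr0 : (0:ℝ) < Cr := lt_of_lt_of_le one_pos hCr
  set μ : ℝ := Cr * lam with hμ
  have hμ0 : μ ≠ 0 := mul_ne_zero (ne_of_gt hCr0) hlam
  -- complex eigen equation
  set Zc : Matrix m m ℂ := Zm.map (Int.cast : ℤ → ℂ) with hZc
  set w : m → ℂ := fun i => (v i : ℂ) with hw
  have hwne : w ≠ 0 := by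
    intro h
    apply hv
    funext i
    have := congrFun h i
    simpa [hw] using this
  have hmulc : Zc.mulVec w = (μ : ℂ) • w := by
    funext i
    have hr : ((Zm.map (Int.cast : ℤ → ℝ)).mulVec v) i = μ * v i := by
      rw [hmap, Matrix.smul_mulVec, hmul]
      simp [hμ, mul_assoc]
    simp only [Matrix.mulVec, dotProduct, Matrix.map_apply] at hr ⊢
    have : ∑ j, (Zm i j : ℂ) * w j = ((∑ j, (Zm i j : ℝ) * v j : ℝ) : ℂ) := by
      push_cast
      rfl
    rw [hZc]
    simp only [Matrix.map_apply]
    rw [this, hr]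
    push_cast
    simp [hμ, hw]
  have hrootp : (Zc.charpoly).eval (μ : ℂ) = 0 :=
    aux_root_of_eigen Zc (μ : ℂ) w hwne hmulc
  -- integer char poly and factorization
  set p : ℤ[X] := Zm.charpoly with hp
  have hpm : p.Monic := Zm.charpoly_monic
  have hpne : p ≠ 0 := hpm.ne_zero
  set k : ℕ := p.rootMultiplicity 0 with hk
  set q : ℤ[X] := p /ₘ (X - Polynomial.C 0) ^ k with hq
  have hfact : (X - Polynomial.C 0) ^ k * q = p := Polynomial.pow_mul_divByMonic_rootMultiplicity_eq p 0
  have hq0 : q.eval 0 ≠ 0 := eval_divByMonic_pow_rootMultiplicity_ne_zero 0 hpne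
  have hqne : q ≠ 0 := fun h => hq0 (by simp [h])
  have hqdeg : q.natDegree ≤ N := by
    have h1 : p.natDegree = N := by rw [hp, Zm.charpoly_natDegree_eq_dim, hN]
    have h2 : ((X - Polynomial.C (0:ℤ)) ^ k * q).natDegree =
        ((X - Polynomial.C (0:ℤ)) ^ k).natDegree + q.natDegree :=
      natDegree_mul (pow_ne_zero _ (X_sub_C_ne_zero 0)) hqne
    rw [hfact, h1] at h2
    omega
  have hqm : q.Monic := by
    have h := hpm
    rw [← hfact] at h
    exact ((monic_X_sub_C (0:ℤ)).pow k).of_mul_monic_left h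
  -- q over ℂ
  set qc : ℂ[X] := q.map (Int.castRingHom ℂ) with hqc
  have hqcm : qc.Monic := hqm.map _
  have hpc : Zc.charpoly = p.map (Int.castRingHom ℂ) := by
    rw [hZc, hp]
    exact Zm.charpoly_map (Int.castRingHom ℂ)
  have hrootqc : qc.eval (μ : ℂ) = 0 := by
    have := hrootp
    rw [hpc, ← hfact, Polynomial.map_mul] at this
    simp only [Polynomial.map_pow, Polynomial.map_sub, Polynomial.map_X, Polynomial.map_C,
      map_zero, eval_mul, eval_pow, eval_sub, eval_X, eval_C, sub_zero] at this
    rcases mul_eq_zero.1 this with h | h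
    · exact absurd (pow_eq_zero_iff (by
        -- k could be 0? if k = 0 then μ^0 = 1 ≠ 0
        intro hk0
        rw [hk0, pow_zero] at h
        exact one_ne_zero h) |>.1 h) (by exact_mod_cast hμ0)
    · exact h
  -- roots of qc over ℂ
  set R : Multiset ℂ := qc.roots with hR
  have hqcne : qc ≠ 0 := hqcm.ne_zero
  have hμR : (μ : ℂ) ∈ R := by
    rw [hR, Polynomial.mem_roots hqcne]
    exact hrootqc
  have hqcfact : qc = (R.map fun r => X - Polynomial.C r).prod :=
    (IsAlgClosed.splits qc).eq_prod_roots_of_monic hqcm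
  have heval0 : ‖qc.eval 0‖ = ((R.map fun r => ‖r‖).prod) := by
    conv_lhs => rw [hqcfact]
    rw [Polynomial.eval_multiset_prod, Multiset.map_map, ← normHom_apply, map_multiset_prod,
      Multiset.map_map]
    congr 1
    apply Multiset.map_congr rfl
    intro r _
    simp
  have h1le : (1:ℝ) ≤ ‖qc.eval 0‖ := by
    have he : qc.eval 0 = ((q.eval 0 : ℤ) : ℂ) := by
      rw [hqc, Polynomial.eval_zero_map]; rfl
    rw [he, Complex.norm_intCast]
    exact_mod_cast Int.one_le_abs hq0
  -- bound on each root
  have hroots_bound : ∀ r ∈ R, ‖r‖ ≤ Cr * B * N := by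
    intro r hr
    have hrroot : qc.eval r = 0 := by
      rw [hR, Polynomial.mem_roots hqcne] at hr
      exact hr
    have hZcroot : (Zc.charpoly).eval r = 0 := by
      rw [hpc, ← hfact, Polynomial.map_mul, eval_mul, hrroot, mul_zero]
    have hb : ∀ i j, ‖Zc i j‖ ≤ Cr * B := by
      intro i j
      rw [hZc]
      simp only [Matrix.map_apply]
      rw [Complex.norm_intCast]
      exact hent i j
    have := aux_root_bound Zc r hZcroot (Cr * B) hb
    rw [← hN] at this
    calc ‖r‖ ≤ (N : ℝ) * (Cr * B) := this
      _ = Cr * B * N := by ring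
  -- split off μ
  set R' : Multiset ℂ := R.erase (μ : ℂ) with hR'
  have hRcons : R = (μ : ℂ) ::ₘ R' := (Multiset.cons_erase hμR).symm
  have hcard : Multiset.card R' ≤ N := by
    have hc1 : Multiset.card R ≤ q.natDegree := by
      have := Polynomial.card_roots' qc
      rw [← hR] at this
      refine le_trans this ?_
      rw [hqc]
      exact Polynomial.natDegree_map_le

    have hc2 := Multiset.card_erase_le (a := (μ:ℂ)) (s := R)
    rw [← hR'] at hc2
    exact le_trans hc2 (le_trans hc1 hqdeg)
  have hbub : (1:ℝ) ≤ Cr * B * N := by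
    have h01 : (1:ℝ) ≤ (N:ℝ) := by exact_mod_cast hN1
    have h02 : (1:ℝ) ≤ Cr * B := by nlinarith
    nlinarith
  have hprodR' : (R'.map fun r => ‖r‖).prod ≤ (Cr * B * N) ^ N := by
    refine le_trans (aux_prod_le (le_trans zero_le_one hbub) _ ?_) ?_
    · intro x hx
      obtain ⟨r, hr, rfl⟩ := Multiset.mem_map.1 hx
      exact ⟨norm_nonneg _, hroots_bound r (by rw [hRcons]; exact Multiset.mem_cons_of_mem hr)⟩
    · rw [Multiset.card_map]
      exact pow_le_pow_right₀ hbub hcard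
  -- chain of inequalities
  have habsμ : ‖((μ:ℝ):ℂ)‖ = Cr * |lam| := by
    rw [Complex.norm_real, Real.norm_eq_abs, hμ, abs_mul, abs_of_pos hCr0]
  have hchain : (1:ℝ) ≤ Cr * |lam| * (Cr * B * N) ^ N := by
    calc (1:ℝ) ≤ ‖qc.eval 0‖ := h1le
      _ = ((R.map fun r => ‖r‖).prod) := heval0
      _ = ‖((μ:ℝ):ℂ)‖ * (R'.map fun r => ‖r‖).prod := by
          rw [hRcons, Multiset.map_cons, Multiset.prod_cons]
      _ ≤ Cr * |lam| * (Cr * B * N) ^ N := by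
          rw [habsμ]
          refine mul_le_mul_of_nonneg_left hprodR' ?_
          positivity
  rw [div_le_iff₀ (by positivity)]
  nlinarith [hchain]

end Aux

open MvPolynomial

/-- lower bound on the nonzero eigenvalues of the moment matrix `M_t(L)`
of a linear functional `L` whose moments up to degree `2t` are bounded by `B` and
become integers after multiplication by `C`. -/
theorem moment_matrix_eigenvalue_lower_bound
    (n t : ℕ) (hn : 1 ≤ n) (ht : 1 ≤ t)
    (L : MvPolynomial (Fin n) ℝ →ₗ[ℝ] ℝ)
    (B : ℝ) (hB : 1 ≤ B) (C : ℕ) (hC : 1 ≤ C)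
    (hbd : ∀ α : Fin n →₀ ℕ, (α.sum fun _ e => e) ≤ 2 * t →
      |L (monomial α 1)| ≤ B)
    (hint : ∀ α : Fin n →₀ ℕ, (α.sum fun _ e => e) ≤ 2 * t →
      ∃ z : ℤ, (C : ℝ) * L (monomial α 1) = (z : ℝ))
    (N : ℕ)
    (hN : N = Nat.card {α : Fin n →₀ ℕ // (α.sum fun _ e => e) ≤ t})
    (lam : ℝ) (hlam : lam ≠ 0)
    (v : {α : Fin n →₀ ℕ // (α.sum fun _ e => e) ≤ t} → ℝ) (hv : v ≠ 0)
    (heig : ∀ α : {α : Fin n →₀ ℕ // (α.sum fun _ e => e) ≤ t},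
      ∑ᶠ β : {α : Fin n →₀ ℕ // (α.sum fun _ e => e) ≤ t},
        L (monomial (α.1 + β.1) 1) * v β = lam * v α) :
    1 / ((C : ℝ) * ((C : ℝ) * B * N) ^ N) ≤ |lam| := by
  have key : ∀ (f : Fin n →₀ ℕ) (i : Fin n), f i ≤ f.sum fun _ e => e := by
    intro f i
    by_cases h : f i = 0
    · simp [h]
    · exact Finset.single_le_sum (f := fun a => f a) (fun _ _ => Nat.zero_le _)
        (Finsupp.mem_support_iff.2 h)
  haveI : Finite {α : Fin n →₀ ℕ // (α.sum fun _ e => e) ≤ t} := by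
    apply Finite.of_injective
      (fun α : {α : Fin n →₀ ℕ // (α.sum fun _ e => e) ≤ t} => (fun i => (⟨α.1 i,
      Nat.lt_succ_of_le (le_trans (key α.1 i) α.2)⟩ : Fin (t+1))))
    intro α β hαβ
    ext i
    exact congrArg Fin.val (congrFun hαβ i)
  haveI : Fintype {α : Fin n →₀ ℕ // (α.sum fun _ e => e) ≤ t} := Fintype.ofFinite _
  haveI : DecidableEq {α : Fin n →₀ ℕ // (α.sum fun _ e => e) ≤ t} := Classical.decEq _
  haveI : Nonempty {α : Fin n →₀ ℕ // (α.sum fun _ e => e) ≤ t} := ⟨⟨0, by simp⟩⟩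
  have hNcard : N = Fintype.card {α : Fin n →₀ ℕ // (α.sum fun _ e => e) ≤ t} := by
    rw [hN, Nat.card_eq_fintype_card]
  have hN1 : 1 ≤ N := by rw [hNcard]; exact Fintype.card_pos
  have hdeg : ∀ α β : {α : Fin n →₀ ℕ // (α.sum fun _ e => e) ≤ t},
      ((α.1 + β.1).sum fun _ e => e) ≤ 2 * t := by
    intro α β
    rw [Finsupp.sum_add_index' (fun _ => rfl) (fun _ _ _ => rfl)]
    have h1 := α.2; have h2 := β.2; omega
  set Mmat : Matrix {α : Fin n →₀ ℕ // (α.sum fun _ e => e) ≤ t}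
      {α : Fin n →₀ ℕ // (α.sum fun _ e => e) ≤ t} ℝ :=
    fun α β => L (monomial (α.1 + β.1) 1) with hMmat
  have hmul : Mmat.mulVec v = lam • v := by
    funext α
    have h := heig α
    rw [finsum_eq_sum_of_fintype] at h
    simpa [Matrix.mulVec, dotProduct, hMmat] using h
  have hZex : ∀ α β : {α : Fin n →₀ ℕ // (α.sum fun _ e => e) ≤ t},
      ∃ z : ℤ, (C : ℝ) * Mmat α β = (z : ℝ) :=
    fun α β => hint _ (hdeg α β)
  choose Z hZ using hZex
  set Zmat : Matrix {α : Fin n →₀ ℕ // (α.sum fun _ e => e) ≤ t}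
      {α : Fin n →₀ ℕ // (α.sum fun _ e => e) ≤ t} ℤ := fun α β => Z α β with hZmat
  have hmapR : Zmat.map (Int.cast : ℤ → ℝ) = (C : ℝ) • Mmat := by
    ext α β
    rw [Matrix.map_apply]
    simp [hZmat, Matrix.map_apply, ← hZ α β]
  have hentry : ∀ α β : {α : Fin n →₀ ℕ // (α.sum fun _ e => e) ≤ t},
      |(Zmat α β : ℝ)| ≤ (C : ℝ) * B := by
    intro α β
    rw [hZmat, ← hZ α β, abs_mul, abs_of_nonneg (by positivity : (0:ℝ) ≤ (C:ℝ))]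
    exact mul_le_mul_of_nonneg_left (hbd _ (hdeg α β)) (by positivity)
  exact aux_main Mmat Zmat (C : ℝ) B (by exact_mod_cast hC) hB hmapR hentry
    N hNcard hN1 lam hlam v hv hmul
end

section
/- Let n, t, d ≥ 1 with t ≥ ⌈d/2⌉, let L : ℝ[x_1,…,x_n] → ℝ be a linear functional, let B ≥ 1 be a real number and C ≥ 1 an integer such that for every α ∈ ℕ^n with |α| ≤ 2t one has |L(x^α)| ≤ B and C·L(x^α) ∈ ℤ. Let g = Σ_{|γ|≤d} g_γ x^γ be a polynomial of degree at most d, let G ≥ 1 be real and C_g ≥ 1 an integer such that |g_γ| ≤ G and C_g·g_γ ∈ ℤ for all |γ| ≤ d. Let N' be the number of exponents α ∈ ℕ^n with |α| ≤ t − ⌈d/2⌉, let h(n,d) be the number of exponents γ ∈ ℕ^n with |γ| ≤ d, and let M_t(gL) be the localizing matrix of L with respect to g. Then for every real number λ ≠ 0 for which there exists a nonzero vector v (indexed by exponents of degree ≤ t − ⌈d/2⌉) with M_t(gL)·v = λv, one has |λ| ≥ 1/(C·C_g·(C·C_g·h(n,d)·G·B·N')^{N'}). -/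
open MvPolynomial
set_option maxHeartbeats 1000000

lemma aux_one_le_mul {a b : ℝ} (ha : 1 ≤ a) (hb : 1 ≤ b) : 1 ≤ a * b := by nlinarith

-- finiteness of bounded-degree exponents
lemma aux_finite (n k : ℕ) : Finite {α : Fin n →₀ ℕ // (α.sum fun _ e => e) ≤ k} := by
  have hle : ∀ α : {α : Fin n →₀ ℕ // (α.sum fun _ e => e) ≤ k}, ∀ i, α.1 i ≤ k := by
    intro α i
    by_cases h : α.1 i = 0
    · simp [h]
    · refine le_trans ?_ α.2
      rw [Finsupp.sum]
      exact Finset.single_le_sum (fun j _ => Nat.zero_le _) (Finsupp.mem_support_iff.mpr h)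
  have : Function.Injective
      (fun α : {α : Fin n →₀ ℕ // (α.sum fun _ e => e) ≤ k} =>
        (fun i => (⟨α.1 i, Nat.lt_succ_of_le (hle α i)⟩ : Fin (k+1)))) := by
    intro a b hab
    ext i
    exact congrArg Fin.val (congrFun hab i)
  exact Finite.of_injective _ this

lemma aux_gershgorin {m : Type*} [Fintype m] [DecidableEq m] {A : Matrix m m ℝ}
    {w : m → ℝ} {μ : ℝ} (hw : w ≠ 0) (h : A.mulVec w = μ • w)
    {E : ℝ} (hE : ∀ i j, |A i j| ≤ E) :
    |μ| ≤ Fintype.card m * E := by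
  have hev : Module.End.HasEigenvalue (Matrix.toLin' A) μ :=
    Module.End.hasEigenvalue_of_hasEigenvector
      ⟨Module.End.mem_eigenspace_iff.mpr (by rw [Matrix.toLin'_apply, h]), hw⟩
  obtain ⟨k, hk⟩ := eigenvalue_mem_ball hev
  rw [Metric.mem_closedBall, Real.dist_eq] at hk
  have h1 : |μ| ≤ |μ - A k k| + |A k k| := by
    have := abs_sub_abs_le_abs_sub μ (A k k); linarith [abs_abs (A k k)]
  have h2 : ∑ j ∈ Finset.univ.erase k, ‖A k j‖ + |A k k|
      ≤ (Fintype.card m : ℝ) * E := by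
    have : ∑ j ∈ Finset.univ.erase k, |A k j| + |A k k| = ∑ j, |A k j| := by
      exact Finset.sum_erase_add _ _ (Finset.mem_univ k)
    simp only [Real.norm_eq_abs]
    rw [this]
    calc ∑ j, |A k j| ≤ ∑ _j : m, E := Finset.sum_le_sum (fun j _ => hE k j)
      _ = (Fintype.card m : ℝ) * E := by rw [Finset.sum_const, nsmul_eq_mul, Finset.card_univ]
  simp only [Real.norm_eq_abs] at hk h2
  linarith

lemma aux_charmatrix_diagonal {m : Type*} [Fintype m] [DecidableEq m] (f : m → ℝ) :
    Matrix.charmatrix (Matrix.diagonal f) = Matrix.diagonal (fun i => Polynomial.X - Polynomial.C (f i)) := by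
  ext i j
  by_cases h : i = j
  · subst h; simp
  · rw [Matrix.charmatrix_apply_ne _ _ _ h, Matrix.diagonal_apply_ne _ h,
      Matrix.diagonal_apply_ne _ h, map_zero, neg_zero]

lemma aux_charpoly_herm {m : Type*} [Fintype m] [DecidableEq m] {A : Matrix m m ℝ}
    (hA : A.IsHermitian) :
    A.charpoly = ∏ i, (Polynomial.X - Polynomial.C (hA.eigenvalues i)) := by
  classical
  set U : Matrix m m ℝ := (hA.eigenvectorUnitary : Matrix m m ℝ) with hU
  have hU1 : U * star U = 1 := Matrix.mem_unitaryGroup_iff.mp hA.eigenvectorUnitary.2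
  have hspec : A = U * Matrix.diagonal hA.eigenvalues * star U := by
    have := hA.spectral_theorem
    simpa using this
  set φ := ((Polynomial.C : ℝ →+* Polynomial ℝ).mapMatrix : Matrix m m ℝ →+* Matrix m m (Polynomial ℝ)) with hφ
  have hφ1 : φ U * φ (star U) = 1 := by rw [← RingHom.map_mul φ, hU1, RingHom.map_one]
  have hcomm : φ U * Matrix.scalar m (Polynomial.X : Polynomial ℝ) = Matrix.scalar m (Polynomial.X : Polynomial ℝ) * φ U :=
    ((Matrix.scalar_commute (Polynomial.X : Polynomial ℝ) (fun r => Commute.all _ _) (φ U))).symm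
  have hch : Matrix.charmatrix A
      = φ U * Matrix.charmatrix (Matrix.diagonal hA.eigenvalues) * φ (star U) := by
    rw [Matrix.charmatrix, Matrix.charmatrix, mul_sub, sub_mul]
    congr 1
    · rw [hcomm, mul_assoc, hφ1, mul_one]
    · rw [show Polynomial.C.mapMatrix A = φ (U * Matrix.diagonal hA.eigenvalues * star U) from
        congrArg _ hspec]
      simp only [φ, RingHom.map_mul]
  rw [Matrix.charpoly, hch, Matrix.det_mul, Matrix.det_mul, mul_comm (Matrix.det (φ U)),
    mul_assoc, ← Matrix.det_mul, hφ1, Matrix.det_one, mul_one,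
    aux_charmatrix_diagonal, Matrix.det_diagonal]

/-- lower bound on the nonzero eigenvalues of the localizing matrix
`M_t(gL)`, whose `(α,β)`-entry is `L(g·x^{α+β})` for `|α|,|β| ≤ t − ⌈d/2⌉`. -/
theorem localizing_matrix_eigenvalue_lower_bound
    (n t d : ℕ) (hn : 1 ≤ n) (ht : 1 ≤ t) (hd : 1 ≤ d)
    (htd : (d + 1) / 2 ≤ t)
    (L : MvPolynomial (Fin n) ℝ →ₗ[ℝ] ℝ)
    (B : ℝ) (hB : 1 ≤ B) (C : ℕ) (hC : 1 ≤ C)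
    (hbd : ∀ α : Fin n →₀ ℕ, (α.sum fun _ e => e) ≤ 2 * t →
      |L (monomial α 1)| ≤ B)
    (hint : ∀ α : Fin n →₀ ℕ, (α.sum fun _ e => e) ≤ 2 * t →
      ∃ z : ℤ, (C : ℝ) * L (monomial α 1) = (z : ℝ))
    (g : MvPolynomial (Fin n) ℝ) (hgdeg : g.totalDegree ≤ d)
    (G : ℝ) (hG : 1 ≤ G) (Cg : ℕ) (hCg : 1 ≤ Cg)
    (hgbd : ∀ γ : Fin n →₀ ℕ, (γ.sum fun _ e => e) ≤ d → |g.coeff γ| ≤ G)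
    (hgint : ∀ γ : Fin n →₀ ℕ, (γ.sum fun _ e => e) ≤ d →
      ∃ z : ℤ, (Cg : ℝ) * g.coeff γ = (z : ℝ))
    (N' : ℕ)
    (hN' : N' = Nat.card {α : Fin n →₀ ℕ // (α.sum fun _ e => e) ≤ t - (d + 1) / 2})
    (H : ℕ)
    (hH : H = Nat.card {γ : Fin n →₀ ℕ // (γ.sum fun _ e => e) ≤ d})
    (lam : ℝ) (hlam : lam ≠ 0)
    (v : {α : Fin n →₀ ℕ // (α.sum fun _ e => e) ≤ t - (d + 1) / 2} → ℝ) (hv : v ≠ 0)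
    (heig : ∀ α : {α : Fin n →₀ ℕ // (α.sum fun _ e => e) ≤ t - (d + 1) / 2},
      ∑ᶠ β : {α : Fin n →₀ ℕ // (α.sum fun _ e => e) ≤ t - (d + 1) / 2},
        L (g * monomial (α.1 + β.1) 1) * v β = lam * v α) :
    1 / ((C : ℝ) * Cg * ((C : ℝ) * Cg * H * G * B * N') ^ N') ≤ |lam| := by
  classical
  haveI : Finite {α : Fin n →₀ ℕ // (α.sum fun _ e => e) ≤ t - (d + 1) / 2} := aux_finite n _
  haveI : Fintype {α : Fin n →₀ ℕ // (α.sum fun _ e => e) ≤ t - (d + 1) / 2} :=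
    Fintype.ofFinite _
  haveI : Finite {γ : Fin n →₀ ℕ // (γ.sum fun _ e => e) ≤ d} := aux_finite n d
  haveI : Fintype {γ : Fin n →₀ ℕ // (γ.sum fun _ e => e) ≤ d} := Fintype.ofFinite _
  -- cardinalities
  have hcardN : Fintype.card {α : Fin n →₀ ℕ // (α.sum fun _ e => e) ≤ t - (d + 1) / 2} = N' := by rw [hN', Nat.card_eq_fintype_card]
  have hN1 : 1 ≤ N' := by
    rw [← hcardN]
    have : Nonempty {α : Fin n →₀ ℕ // (α.sum fun _ e => e) ≤ t - (d + 1) / 2} := ⟨⟨0, by simp⟩⟩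
    exact Fintype.card_pos
  have hH1 : 1 ≤ H := by
    rw [hH, Nat.card_eq_fintype_card]
    have : Nonempty {γ : Fin n →₀ ℕ // (γ.sum fun _ e => e) ≤ d} := ⟨⟨0, by simp⟩⟩
    exact Fintype.card_pos
  -- degree facts
  have hdegadd : ∀ (x y : Fin n →₀ ℕ),
      ((x + y).sum fun _ e => e) = (x.sum fun _ e => e) + (y.sum fun _ e => e) :=
    fun x y => Finsupp.sum_add_index' (fun _ => rfl) (fun _ _ _ => rfl)
  have hdeg2 : ∀ (a b : {α : Fin n →₀ ℕ // (α.sum fun _ e => e) ≤ t - (d + 1) / 2}), ∀ γ ∈ g.support,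
      (((γ + (a.1 + b.1)).sum fun _ e => e) ≤ 2 * t) := by
    intro a b γ hγ
    have h1 : (γ.sum fun _ e => e) ≤ d := le_trans (le_totalDegree hγ) hgdeg
    have h2 := a.2
    have h3 := b.2
    rw [hdegadd, hdegadd]
    omega
  -- entry expansion
  have hE : ∀ m : Fin n →₀ ℕ,
      L (g * monomial m 1) = ∑ γ ∈ g.support, g.coeff γ * L (monomial (γ + m) 1) := by
    intro m
    have h1 : g * monomial m 1 = ∑ γ ∈ g.support, monomial (γ + m) (g.coeff γ) := by
      conv_lhs => rw [g.as_sum]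
      rw [Finset.sum_mul]
      exact Finset.sum_congr rfl fun γ _ => by rw [monomial_mul, mul_one]
    rw [h1, map_sum]
    refine Finset.sum_congr rfl fun γ _ => ?_
    have h2 : (monomial (γ + m)) (g.coeff γ) = g.coeff γ • (monomial (γ + m)) (1 : ℝ) := by
      rw [MvPolynomial.smul_monomial, smul_eq_mul, mul_one]
    rw [h2, L.map_smul, smul_eq_mul]
  -- support card
  have hsupp : g.support.card ≤ H := by
    rw [hH, Nat.card_eq_fintype_card]
    have hinj : Function.Injective
        (fun γ : {x // x ∈ g.support} =>
          (⟨γ.1, le_trans (le_totalDegree γ.2) hgdeg⟩ :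
            {γ : Fin n →₀ ℕ // (γ.sum fun _ e => e) ≤ d})) := by
      intro a b hab
      simp only [Subtype.mk.injEq] at hab
      exact Subtype.ext hab
    simpa [Fintype.card_coe] using Fintype.card_le_of_injective _ hinj
  -- entry bound
  have hGB : (0:ℝ) ≤ G * B := by nlinarith
  have hMbd : ∀ a b : {α : Fin n →₀ ℕ // (α.sum fun _ e => e) ≤ t - (d + 1) / 2}, |L (g * monomial (a.1 + b.1) 1)| ≤ (H : ℝ) * G * B := by
    intro a b
    rw [hE]
    calc |∑ γ ∈ g.support, g.coeff γ * L (monomial (γ + (a.1 + b.1)) 1)|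
        ≤ ∑ γ ∈ g.support, |g.coeff γ * L (monomial (γ + (a.1 + b.1)) 1)| :=
          Finset.abs_sum_le_sum_abs _ _
      _ ≤ ∑ _γ ∈ g.support, G * B := by
          refine Finset.sum_le_sum fun γ hγ => ?_
          rw [abs_mul]
          exact mul_le_mul (hgbd γ (le_trans (le_totalDegree hγ) hgdeg))
            (hbd _ (hdeg2 a b γ hγ)) (abs_nonneg _) (le_trans zero_le_one hG)
      _ = (g.support.card : ℝ) * (G * B) := by rw [Finset.sum_const, nsmul_eq_mul]
      _ ≤ (H : ℝ) * (G * B) := by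
          exact mul_le_mul_of_nonneg_right (Nat.cast_le.mpr hsupp) hGB
      _ = (H : ℝ) * G * B := by ring
  -- the matrix
  set A : Matrix {α : Fin n →₀ ℕ // (α.sum fun _ e => e) ≤ t - (d + 1) / 2} {α : Fin n →₀ ℕ // (α.sum fun _ e => e) ≤ t - (d + 1) / 2} ℝ :=
    Matrix.of (fun a b => ((C : ℝ) * Cg) * L (g * monomial (a.1 + b.1) 1)) with hA
  have hAapp : ∀ a b : {α : Fin n →₀ ℕ // (α.sum fun _ e => e) ≤ t - (d + 1) / 2}, A a b = ((C : ℝ) * Cg) * L (g * monomial (a.1 + b.1) 1) :=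
    fun a b => rfl
  -- integrality of entries
  set zg : (Fin n →₀ ℕ) → ℤ := fun γ =>
    if h : (γ.sum fun _ e => e) ≤ d then (hgint γ h).choose else 0 with hzg
  set zL : (Fin n →₀ ℕ) → ℤ := fun α =>
    if h : (α.sum fun _ e => e) ≤ 2 * t then (hint α h).choose else 0 with hzL
  have hZint : ∀ a b : {α : Fin n →₀ ℕ // (α.sum fun _ e => e) ≤ t - (d + 1) / 2}, A a b =
      ((∑ γ ∈ g.support, zg γ * zL (γ + (a.1 + b.1)) : ℤ) : ℝ) := by
    intro a b
    rw [hAapp, hE, Finset.mul_sum]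
    push_cast
    refine Finset.sum_congr rfl fun γ hγ => ?_
    have hγd : (γ.sum fun _ e => e) ≤ d := le_trans (le_totalDegree hγ) hgdeg
    have h1 : ((zg γ : ℤ) : ℝ) = (Cg : ℝ) * g.coeff γ := by
      rw [hzg]; simp only [dif_pos hγd]; exact ((hgint γ hγd).choose_spec).symm
    have h2 : ((zL (γ + (a.1 + b.1)) : ℤ) : ℝ) = (C : ℝ) * L (monomial (γ + (a.1 + b.1)) 1) := by
      rw [hzL]; simp only [dif_pos (hdeg2 a b γ hγ)]
      exact ((hint _ (hdeg2 a b γ hγ)).choose_spec).symm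
    rw [h1, h2]; ring
  set Z : Matrix {α : Fin n →₀ ℕ // (α.sum fun _ e => e) ≤ t - (d + 1) / 2} {α : Fin n →₀ ℕ // (α.sum fun _ e => e) ≤ t - (d + 1) / 2} ℤ :=
    Matrix.of (fun a b => ∑ γ ∈ g.support, zg γ * zL (γ + (a.1 + b.1))) with hZ
  have hAZ : A = Z.map (Int.castRingHom ℝ) := by
    funext a b
    exact hZint a b
  -- hermitian
  have hsym : A.IsHermitian := by
    rw [Matrix.IsHermitian]
    ext a b
    rw [Matrix.conjTranspose_apply, star_trivial, hAapp, hAapp, add_comm b.1 a.1]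
  -- eigenvalue equation
  set μ : ℝ := ((C : ℝ) * Cg) * lam with hμ
  have hC1 : (1:ℝ) ≤ (C : ℝ) := by exact_mod_cast hC
  have hCg1 : (1:ℝ) ≤ (Cg : ℝ) := by exact_mod_cast hCg
  have hμ0 : μ ≠ 0 := by
    apply mul_ne_zero (mul_ne_zero _ _) hlam <;> positivity
  have hAv : A.mulVec v = μ • v := by
    funext a
    have h0 := heig a
    rw [finsum_eq_sum_of_fintype] at h0
    show ∑ b, A a b * v b = μ * v a
    calc ∑ b, A a b * v b
        = ((C : ℝ) * Cg) * ∑ b, L (g * monomial (a.1 + b.1) 1) * v b := by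
          rw [Finset.mul_sum]; exact Finset.sum_congr rfl fun (b : {α : Fin n →₀ ℕ // (α.sum fun _ e => e) ≤ t - (d + 1) / 2}) _ => by rw [hAapp a b]; ring
      _ = ((C : ℝ) * Cg) * (lam * v a) := by rw [h0]
      _ = μ * v a := by rw [hμ]; ring
  -- μ is an eigenvalue
  have hdet : Matrix.det (Matrix.scalar {α : Fin n →₀ ℕ // (α.sum fun _ e => e) ≤ t - (d + 1) / 2} μ - A) = 0 := by
    rw [← Matrix.exists_mulVec_eq_zero_iff]
    refine ⟨v, hv, ?_⟩
    rw [Matrix.sub_mulVec, hAv]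
    funext a
    simp [Matrix.scalar, Matrix.mulVec_diagonal]
  have hex : ∃ i, hsym.eigenvalues i = μ := by
    have h1 : Polynomial.eval μ A.charpoly = Matrix.det (Matrix.scalar {α : Fin n →₀ ℕ // (α.sum fun _ e => e) ≤ t - (d + 1) / 2} μ - A) := by
      rw [Matrix.charpoly, _root_.eval_det, Matrix.matPolyEquiv_charmatrix,
        Polynomial.eval_sub, Polynomial.eval_X, Polynomial.eval_C]
    have h2 : Polynomial.eval μ A.charpoly = ∏ i, (μ - hsym.eigenvalues i) := by
      rw [aux_charpoly_herm hsym, Polynomial.eval_prod]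
      exact Finset.prod_congr rfl fun i _ => by
        rw [Polynomial.eval_sub, Polynomial.eval_X, Polynomial.eval_C]
    have h3 : ∏ i, (μ - hsym.eigenvalues i) = 0 := by rw [← h2, h1, hdet]
    obtain ⟨i, -, hi⟩ := Finset.prod_eq_zero_iff.mp h3
    exact ⟨i, (sub_eq_zero.mp hi).symm⟩
  obtain ⟨i₀, hi₀⟩ := hex
  -- eigenvalue bound
  set K : ℝ := (C : ℝ) * Cg * H * G * B * N' with hK
  have hHr : (1:ℝ) ≤ (H : ℝ) := by exact_mod_cast hH1
  have hNr : (1:ℝ) ≤ (N' : ℝ) := by exact_mod_cast hN1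
  have hK1 : (1:ℝ) ≤ K := by
    rw [hK]
    exact aux_one_le_mul (aux_one_le_mul (aux_one_le_mul (aux_one_le_mul
      (aux_one_le_mul hC1 hCg1) hHr) hG) hB) hNr
  have hEntry : ∀ a b : {α : Fin n →₀ ℕ // (α.sum fun _ e => e) ≤ t - (d + 1) / 2}, |A a b| ≤ (C : ℝ) * Cg * ((H : ℝ) * G * B) := by
    intro a b
    rw [hAapp, abs_mul]
    have h1 : |(C : ℝ) * Cg| = (C : ℝ) * Cg := abs_of_nonneg (by positivity)
    rw [h1]
    exact mul_le_mul_of_nonneg_left (hMbd a b) (by positivity)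
  have hlbound : ∀ i : {α : Fin n →₀ ℕ // (α.sum fun _ e => e) ≤ t - (d + 1) / 2}, |hsym.eigenvalues i| ≤ K := by
    intro i
    have hw : (⇑(hsym.eigenvectorBasis i) : {α : Fin n →₀ ℕ // (α.sum fun _ e => e) ≤ t - (d + 1) / 2} → ℝ) ≠ 0 := by
      have := hsym.eigenvectorBasis.orthonormal.ne_zero i
      intro hcon
      apply this
      ext j
      exact congrFun hcon j
    have h1 := aux_gershgorin hw (hsym.mulVec_eigenvectorBasis i) hEntry
    rw [hcardN] at h1
    calc |hsym.eigenvalues i| ≤ (N' : ℝ) * ((C : ℝ) * Cg * ((H : ℝ) * G * B)) := h1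
      _ = K := by rw [hK]; ring
  -- integer product of nonzero eigenvalues
  set s₁ : Finset {α : Fin n →₀ ℕ // (α.sum fun _ e => e) ≤ t - (d + 1) / 2} := Finset.univ.filter (fun i => hsym.eigenvalues i ≠ 0) with hs₁
  set m : ℕ := (Finset.univ.filter (fun i => hsym.eigenvalues i = 0)).card with hm
  have hsplitpoly : A.charpoly =
      Polynomial.X ^ m * ∏ i ∈ s₁, (Polynomial.X - Polynomial.C (hsym.eigenvalues i)) := by
    rw [aux_charpoly_herm hsym,
      ← Finset.prod_filter_mul_prod_filter_not Finset.univ (fun i => hsym.eigenvalues i = 0)]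
    congr 1
    calc ∏ i ∈ Finset.univ.filter (fun i => hsym.eigenvalues i = 0),
          (Polynomial.X - Polynomial.C (hsym.eigenvalues i))
        = ∏ _i ∈ Finset.univ.filter (fun i => hsym.eigenvalues i = 0), (Polynomial.X : Polynomial ℝ) :=
          Finset.prod_congr rfl fun i hi => by
            rw [(Finset.mem_filter.mp hi).2, map_zero, sub_zero]
      _ = Polynomial.X ^ m := Finset.prod_const _
  have hcoeffval : A.charpoly.coeff m = ∏ i ∈ s₁, (- hsym.eigenvalues i) := by
    have hxp := Polynomial.coeff_X_pow_mul
      (∏ i ∈ s₁, (Polynomial.X - Polynomial.C (hsym.eigenvalues i))) m 0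
    rw [zero_add] at hxp
    rw [hsplitpoly, hxp, Polynomial.coeff_zero_eq_eval_zero, Polynomial.eval_prod]
    exact Finset.prod_congr rfl fun i _ => by
      rw [Polynomial.eval_sub, Polynomial.eval_X, Polynomial.eval_C, zero_sub]
  have hcoeffint : ((Z.charpoly.coeff m : ℤ) : ℝ) = A.charpoly.coeff m := by
    rw [hAZ, Matrix.charpoly_map, Polynomial.coeff_map]
    rfl
  have hprodne : ∏ i ∈ s₁, (- hsym.eigenvalues i) ≠ 0 :=
    Finset.prod_ne_zero_iff.mpr fun i hi =>
      neg_ne_zero.mpr (Finset.mem_filter.mp hi).2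
  have hzcoeff : Z.charpoly.coeff m ≠ 0 := by
    intro hcon
    rw [hcon] at hcoeffint
    rw [← hcoeffval, ← hcoeffint] at hprodne
    exact hprodne (by norm_num)
  have hprod1 : (1:ℝ) ≤ ∏ i ∈ s₁, |hsym.eigenvalues i| := by
    have h1 : (1:ℝ) ≤ |((Z.charpoly.coeff m : ℤ) : ℝ)| := by
      rw [← Int.cast_abs]
      exact_mod_cast Int.one_le_abs hzcoeff
    rw [hcoeffint, hcoeffval, Finset.abs_prod] at h1
    calc (1:ℝ) ≤ ∏ i ∈ s₁, |(- hsym.eigenvalues i)| := h1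
      _ = ∏ i ∈ s₁, |hsym.eigenvalues i| := Finset.prod_congr rfl fun i _ => abs_neg _
  -- final accounting
  have hi₀mem : i₀ ∈ s₁ := Finset.mem_filter.mpr ⟨Finset.mem_univ _, by rw [hi₀]; exact hμ0⟩
  have hsplit : ∏ i ∈ s₁, |hsym.eigenvalues i|
      = |μ| * ∏ i ∈ s₁.erase i₀, |hsym.eigenvalues i| := by
    rw [← Finset.mul_prod_erase s₁ _ hi₀mem, hi₀]
  have herasebd : ∏ i ∈ s₁.erase i₀, |hsym.eigenvalues i| ≤ K ^ N' := by
    calc ∏ i ∈ s₁.erase i₀, |hsym.eigenvalues i| ≤ K ^ (s₁.erase i₀).card :=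
          le_of_le_of_eq (Finset.prod_le_prod (fun i _ => abs_nonneg _) (fun i _ => hlbound i))
            (Finset.prod_const _)
      _ ≤ K ^ N' := by
          apply pow_le_pow_right₀ hK1
          calc (s₁.erase i₀).card ≤ Fintype.card {α : Fin n →₀ ℕ // (α.sum fun _ e => e) ≤ t - (d + 1) / 2} :=
                le_trans (Finset.card_le_card (Finset.subset_univ _)) (le_of_eq Finset.card_univ)
            _ = N' := hcardN
  have hmain : 1 ≤ |μ| * K ^ N' := by
    calc (1:ℝ) ≤ ∏ i ∈ s₁, |hsym.eigenvalues i| := hprod1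
      _ = |μ| * ∏ i ∈ s₁.erase i₀, |hsym.eigenvalues i| := hsplit
      _ ≤ |μ| * K ^ N' := mul_le_mul_of_nonneg_left herasebd (abs_nonneg _)
  have hμabs : |μ| = (C : ℝ) * Cg * |lam| := by
    rw [hμ, abs_mul, abs_of_nonneg (show (0:ℝ) ≤ (C:ℝ) * Cg by positivity)]
  have hpos : (0:ℝ) < (C : ℝ) * Cg * K ^ N' := by positivity
  rw [div_le_iff₀ hpos]
  calc (1:ℝ) ≤ |μ| * K ^ N' := hmain
    _ = ((C : ℝ) * Cg * |lam|) * K ^ N' := by rw [hμabs]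
    _ = |lam| * ((C : ℝ) * Cg * K ^ N') := by ring
end

section
/- Let n, t ≥ 1 and R > 0, and let L : ℝ[x_1,…,x_n] → ℝ be a linear functional such that: L(1) = 1; L(p²) ≥ 0 for every polynomial p of degree at most t; and L((R² − Σ_{i=1}^n x_i²)·p²) ≥ 0 for every polynomial p of degree at most t − 1. Then |L(x^α)| ≤ R^{|α|} for every α ∈ ℕ^n with |α| ≤ 2t. -/
open MvPolynomial


-- splitting lemma
lemma exists_le_sum_eq {n : ℕ} (α : Fin n →₀ ℕ) :
    ∀ k, k ≤ (α.sum fun _ e => e) → ∃ β : Fin n →₀ ℕ, β ≤ α ∧ (β.sum fun _ e => e) = k := by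
  intro k
  induction k with
  | zero => intro _; exact ⟨0, zero_le, Finsupp.sum_zero_index⟩
  | succ k ih =>
    intro hk
    obtain ⟨β, hβle, hβs⟩ := ih (Nat.le_of_succ_le hk)
    have hne : ∃ i, β i < α i := by
      by_contra h
      push_neg at h
      have : β = α := le_antisymm hβle (Finsupp.le_def.mpr h)
      rw [this] at hβs
      omega
    obtain ⟨i, hi⟩ := hne
    refine ⟨β + Finsupp.single i 1, ?_, ?_⟩
    · rw [Finsupp.le_def]
      intro j
      rcases eq_or_ne j i with rfl | hji
      · simpa using hi
      · simpa [Finsupp.single_apply, hji.symm] using Finsupp.le_def.mp hβle j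
    · rw [Finsupp.sum_add_index' (fun _ => rfl) (fun _ _ _ => rfl), hβs,
        Finsupp.sum_single_index rfl]

lemma cs_aux {n t : ℕ} (L : MvPolynomial (Fin n) ℝ →ₗ[ℝ] ℝ)
    (hsos : ∀ p : MvPolynomial (Fin n) ℝ, p.totalDegree ≤ t → 0 ≤ L (p ^ 2))
    (p q : MvPolynomial (Fin n) ℝ) (hp : p.totalDegree ≤ t) (hq : q.totalDegree ≤ t) :
    (L (p * q)) ^ 2 ≤ L (p ^ 2) * L (q ^ 2) := by
  have key : ∀ x : ℝ, 0 ≤ L (q ^ 2) * (x * x) + (2 * L (p * q)) * x + L (p ^ 2) := by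
    intro x
    have hdeg : (C x * q + p).totalDegree ≤ t := by
      refine (totalDegree_add _ _).trans (max_le ?_ hp)
      refine (totalDegree_mul _ _).trans ?_
      simpa [totalDegree_C] using hq
    have hexp : (C x * q + p) ^ 2 =
        (x * x) • q ^ 2 + x • (p * q) + x • (p * q) + p ^ 2 := by
      simp only [smul_eq_C_mul, map_mul]
      ring
    have h0 := hsos _ hdeg
    rw [hexp] at h0
    simp only [map_add, map_smul, smul_eq_mul] at h0
    linarith
  have hd := discrim_le_zero key
  rw [discrim] at hd
  nlinarith

lemma even_aux {n t : ℕ} (ht : 1 ≤ t) (R : ℝ) (hR : 0 < R)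
    (L : MvPolynomial (Fin n) ℝ →ₗ[ℝ] ℝ) (hone : L 1 = 1)
    (hsos : ∀ p : MvPolynomial (Fin n) ℝ, p.totalDegree ≤ t → 0 ≤ L (p ^ 2))
    (hball : ∀ p : MvPolynomial (Fin n) ℝ, p.totalDegree ≤ t - 1 →
      0 ≤ L ((C (R ^ 2) - ∑ i : Fin n, X i ^ 2) * p ^ 2)) :
    ∀ k, ∀ β : Fin n →₀ ℕ, (β.sum fun _ e => e) = k → k ≤ t →
      L ((monomial β 1) ^ 2) ≤ R ^ (2 * k) := by
  intro k
  induction k with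
  | zero =>
    intro β hβ _
    have hβ0 : β = 0 := by
      ext i
      simp only [Finsupp.coe_zero, Pi.zero_apply]
      by_contra h
      have hi : i ∈ β.support := Finsupp.mem_support_iff.mpr h
      have hle : β i ≤ β.sum fun _ e => e :=
        Finset.single_le_sum (fun j _ => Nat.zero_le _) hi
      omega
    simp [hβ0, hone]
  | succ k ih =>
    intro β hβ hkt
    have hsupp : β.support.Nonempty := by
      rw [Finset.nonempty_iff_ne_empty]
      intro h
      rw [Finsupp.sum, h] at hβ
      simp at hβ
    obtain ⟨i, hi⟩ := hsupp
    have hile : Finsupp.single i 1 ≤ β := by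
      rw [Finsupp.single_le_iff]
      exact Nat.one_le_iff_ne_zero.mpr (Finsupp.mem_support_iff.mp hi)
    set β' := β - Finsupp.single i 1 with hβ'
    have hβeq : Finsupp.single i 1 + β' = β := by
      rw [hβ', add_comm]
      exact tsub_add_cancel_of_le hile
    have hβ's : (β'.sum fun _ e => e) = k := by
      have := hβ
      rw [← hβeq, Finsupp.sum_add_index' (fun _ => rfl) (fun _ _ _ => rfl),
        Finsupp.sum_single_index rfl] at this
      omega
    set m' : MvPolynomial (Fin n) ℝ := monomial β' 1 with hm'
    have hdegm' : m'.totalDegree = k := by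
      rw [hm', totalDegree_monomial _ one_ne_zero, hβ's]
    have hdegX : ∀ j : Fin n, (X j * m').totalDegree ≤ t := by
      intro j
      refine (totalDegree_mul _ _).trans ?_
      rw [totalDegree_X, hdegm']
      omega
    have hmono : monomial β (1 : ℝ) = X i * m' := by
      rw [← hβeq, monomial_single_add, pow_one]
    -- step 1
    have h1 : L ((X i * m') ^ 2) ≤ ∑ j : Fin n, L ((X j * m') ^ 2) := by
      exact Finset.single_le_sum (f := fun j => L ((X j * m') ^ 2))
        (fun j _ => hsos _ (hdegX j)) (Finset.mem_univ i)
    -- step 2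
    have h2 : ∑ j : Fin n, L ((X j * m') ^ 2) = L ((∑ j : Fin n, X j ^ 2) * m' ^ 2) := by
      rw [← map_sum]
      congr 1
      rw [Finset.sum_mul]
      exact Finset.sum_congr rfl fun j _ => by ring
    -- step 3
    have h3 : L ((∑ j : Fin n, X j ^ 2) * m' ^ 2) ≤ R ^ 2 * L (m' ^ 2) := by
      have hb := hball m' (by rw [hdegm']; omega)
      have hexp : (C (R ^ 2) - ∑ j : Fin n, X j ^ 2) * m' ^ 2 =
          (R ^ 2) • m' ^ 2 - (∑ j : Fin n, X j ^ 2) * m' ^ 2 := by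
        rw [smul_eq_C_mul]; ring
      rw [hexp, map_sub, map_smul, smul_eq_mul] at hb
      linarith
    have h4 : L (m' ^ 2) ≤ R ^ (2 * k) := ih β' hβ's (by omega)
    calc L ((monomial β (1:ℝ)) ^ 2) = L ((X i * m') ^ 2) := by rw [hmono]
      _ ≤ R ^ 2 * L (m' ^ 2) := by rw [h2] at h1; linarith
      _ ≤ R ^ 2 * R ^ (2 * k) := by nlinarith [sq_nonneg R]
      _ = R ^ (2 * (k + 1)) := by ring


/-- a feasible solution `L` of the moment relaxation with ball constraint
`R² − Σ xᵢ²` has all moments of degree `≤ 2t` bounded by `R^{|α|}`. -/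
theorem moment_bound_of_ball_constraint
    (n t : ℕ) (hn : 1 ≤ n) (ht : 1 ≤ t) (R : ℝ) (hR : 0 < R)
    (L : MvPolynomial (Fin n) ℝ →ₗ[ℝ] ℝ)
    (hone : L 1 = 1)
    (hsos : ∀ p : MvPolynomial (Fin n) ℝ, p.totalDegree ≤ t → 0 ≤ L (p ^ 2))
    (hball : ∀ p : MvPolynomial (Fin n) ℝ, p.totalDegree ≤ t - 1 →
      0 ≤ L ((C (R ^ 2) - ∑ i : Fin n, X i ^ 2) * p ^ 2)) :
    ∀ α : Fin n →₀ ℕ, (α.sum fun _ e => e) ≤ 2 * t →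
      |L (monomial α 1)| ≤ R ^ (α.sum fun _ e => e) := by
  intro α hα
  set s := α.sum fun _ e => e with hs
  obtain ⟨β, hβle, hβs⟩ := exists_le_sum_eq α (min t s) (min_le_right _ _)
  set γ := α - β with hγ
  have hγeq : β + γ = α := by rw [hγ, add_comm]; exact tsub_add_cancel_of_le hβle
  have hsum : (β.sum fun _ e => e) + (γ.sum fun _ e => e) = s := by
    rw [hs, ← hγeq, Finsupp.sum_add_index' (fun _ => rfl) (fun _ _ _ => rfl)]
  have hβt : (β.sum fun _ e => e) ≤ t := by omega
  have hγt : (γ.sum fun _ e => e) ≤ t := by omega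
  have hdβ : (monomial β (1:ℝ)).totalDegree ≤ t := by
    rw [totalDegree_monomial _ one_ne_zero]; exact hβt
  have hdγ : (monomial γ (1:ℝ)).totalDegree ≤ t := by
    rw [totalDegree_monomial _ one_ne_zero]; exact hγt
  have hcs := cs_aux L hsos (monomial β 1) (monomial γ 1) hdβ hdγ
  have hm : monomial β (1:ℝ) * monomial γ 1 = monomial α 1 := by
    rw [monomial_mul, one_mul, hγeq]
  rw [hm] at hcs
  have heβ := even_aux ht R hR L hone hsos hball _ β rfl hβt
  have heγ := even_aux ht R hR L hone hsos hball _ γ rfl hγt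
  have hnβ : 0 ≤ L (monomial β (1:ℝ) ^ 2) := hsos _ hdβ
  have hnγ : 0 ≤ L (monomial γ (1:ℝ) ^ 2) := hsos _ hdγ
  have hsq : (L (monomial α 1)) ^ 2 ≤ (R ^ s) ^ 2 := by
    have hmul : L (monomial β (1:ℝ) ^ 2) * L (monomial γ (1:ℝ) ^ 2) ≤
        R ^ (2 * (β.sum fun _ e => e)) * R ^ (2 * (γ.sum fun _ e => e)) := by
      have hp1 : (0:ℝ) ≤ R ^ (2 * (β.sum fun _ e => e)) := by positivity
      exact mul_le_mul heβ heγ hnγ hp1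
    have hpow : R ^ (2 * (β.sum fun _ e => e)) * R ^ (2 * (γ.sum fun _ e => e)) =
        (R ^ s) ^ 2 := by
      rw [← pow_add, ← pow_mul]
      congr 1
      omega
    calc (L (monomial α 1)) ^ 2 ≤ _ := hcs
      _ ≤ _ := hmul
      _ = (R ^ s) ^ 2 := hpow
  have hRs : (0:ℝ) ≤ R ^ s := by positivity
  nlinarith [abs_nonneg (L (monomial α 1)), sq_abs (L (monomial α 1))]
end

section
/- Let n ≥ 1, let S ⊆ ℝ^n be any set and let δ > 0. If the Lebesgue (outer) measure of the open δ-thickening of the topological boundary of S is strictly smaller than the Lebesgue (outer) measure of S, then there exists a point x ∈ ℝ^n such that the open Euclidean ball B(x, δ) is contained in S. -/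
open MeasureTheory Metric Set.Notation

/-- if the `δ`-thickening of the boundary of `S ⊆ ℝⁿ` has (outer) Lebesgue
measure strictly smaller than that of `S`, then `S` contains an open ball of radius `δ`. -/
theorem exists_ball_of_thickened_frontier_small
    (n : ℕ) (hn : 1 ≤ n)
    (S : Set (EuclideanSpace ℝ (Fin n))) (δ : ℝ) (hδ : 0 < δ)
    (hvol : volume (thickening δ (frontier S)) < volume S) :
    ∃ x : EuclideanSpace ℝ (Fin n), ball x δ ⊆ S := by
  -- S is not contained in the thickening
  have hns : ¬ S ⊆ thickening δ (frontier S) := by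
    intro h
    exact absurd (measure_mono h) (not_le.mpr hvol)
  obtain ⟨x, hxS, hxT⟩ := Set.not_subset.mp hns
  -- ball x δ is disjoint from frontier S
  have hdisj : Disjoint (ball x δ) (frontier S) := by
    rw [Set.disjoint_left]
    intro y hy hyF
    apply hxT
    rw [mem_thickening_iff_exists_edist_lt]
    exact ⟨y, hyF, by rwa [edist_dist, ENNReal.ofReal_lt_ofReal_iff hδ, dist_comm]⟩
  -- then x ∈ interior S
  have hxI : x ∈ interior S := by
    have hxF : x ∉ frontier S := fun h =>
      Set.disjoint_left.mp hdisj (mem_ball_self hδ) h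
    by_contra h
    exact hxF ⟨subset_closure hxS, h⟩
  -- the ball, being preconnected and disjoint from the frontier, lies in interior S
  refine ⟨x, ?_⟩
  have hconn : IsPreconnected (ball x δ) := (convex_ball x δ).isPreconnected
  have hclopen : IsClopen ((ball x δ) ↓∩ interior S) :=
    isClopen_preimage_val isOpen_interior
      (Disjoint.mono_left frontier_interior_subset hdisj.symm)
  have : PreconnectedSpace (ball x δ) := Subtype.preconnectedSpace hconn
  have heq : ((ball x δ) ↓∩ interior S) = Set.univ :=
    hclopen.eq_univ ⟨⟨x, mem_ball_self hδ⟩, hxI⟩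
  intro y hy
  have : (⟨y, hy⟩ : ball x δ) ∈ ((ball x δ) ↓∩ interior S) := heq ▸ Set.mem_univ _
  exact interior_subset this
end

section
/- Let n ≥ 1 and let S ⊆ ℝ^n be the semialgebraic set defined by the inequalities x_i ≥ 0 for 1 ≤ i ≤ n, x_i − x_{i+1}² ≤ 0 for 1 ≤ i ≤ n−1, and x_n ≤ 1/2. Then: (a) S has nonempty interior; (b) every x ∈ S satisfies 0 ≤ x_1 ≤ 2^{−2^{n−1}}; and consequently (c) if an open Euclidean ball B(z, r) with r > 0 is contained in S, then r ≤ 2^{−(2^{n−1}+1)}. -/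
open Metric

/-- Auxiliary sequence: `bseq 0 = 1/4`, `bseq (k+1) = (bseq k)^2 / 2`. -/
noncomputable def bseq : ℕ → ℝ
  | 0 => 1 / 4
  | k + 1 => (bseq k) ^ 2 / 2

lemma bseq_pos : ∀ k, 0 < bseq k
  | 0 => by norm_num [bseq]
  | k + 1 => by
    have := bseq_pos k
    simp only [bseq]
    positivity

/-- the semialgebraic set `{x : xᵢ ≥ 0, xᵢ ≤ xᵢ₊₁², xₙ ≤ 1/2}` has nonempty
interior, every point of it satisfies `0 ≤ x₁ ≤ 2^{−2^{n−1}}`, and hence it contains no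
ball of radius `> 2^{−(2^{n−1}+1)}`. -/
theorem repeated_squaring_small_set
    (n : ℕ) (hn : 1 ≤ n)
    (S : Set (EuclideanSpace ℝ (Fin n)))
    (hS : S = {x : EuclideanSpace ℝ (Fin n) |
      (∀ i : Fin n, 0 ≤ x i) ∧
      (∀ i : ℕ, ∀ h : i + 1 < n, x ⟨i, Nat.lt_of_succ_lt h⟩ ≤ (x ⟨i + 1, h⟩) ^ 2) ∧
      x ⟨n - 1, by omega⟩ ≤ 1 / 2}) :
    (interior S).Nonempty ∧
    (∀ x ∈ S, 0 ≤ x ⟨0, by omega⟩ ∧ x ⟨0, by omega⟩ ≤ ((2 : ℝ) ^ (2 ^ (n - 1)))⁻¹) ∧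
    (∀ (z : EuclideanSpace ℝ (Fin n)) (r : ℝ), 0 < r → ball z r ⊆ S →
      r ≤ ((2 : ℝ) ^ (2 ^ (n - 1) + 1))⁻¹) := by
  -- Part (b): the bound on the first coordinate.
  have hb : ∀ x ∈ S, 0 ≤ x ⟨0, by omega⟩ ∧
      x ⟨0, by omega⟩ ≤ ((2 : ℝ) ^ (2 ^ (n - 1)))⁻¹ := by
    intro x hx
    rw [hS] at hx
    obtain ⟨h0, hsq, htop⟩ := hx
    refine ⟨h0 _, ?_⟩
    have claim : ∀ k, k ≤ n - 1 → ∀ hk : n - 1 - k < n,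
        x ⟨n - 1 - k, hk⟩ ≤ (1 / 2 : ℝ) ^ (2 ^ k) := by
      intro k
      induction k with
      | zero =>
        intro _ hk
        have h1 : (⟨n - 1 - 0, hk⟩ : Fin n) = ⟨n - 1, by omega⟩ := by
          simp [Fin.mk.injEq]
        rw [h1]
        simpa using htop
      | succ k ih =>
        intro hk1 hk
        have hlt : (n - 1 - (k + 1)) + 1 < n := by omega
        have := hsq (n - 1 - (k + 1)) hlt
        have h1 : (⟨(n - 1 - (k + 1)) + 1, hlt⟩ : Fin n) = ⟨n - 1 - k, by omega⟩ := by
          simp [Fin.mk.injEq]; omega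
        rw [h1] at this
        calc x ⟨n - 1 - (k + 1), hk⟩ ≤ (x ⟨n - 1 - k, by omega⟩) ^ 2 := this
          _ ≤ ((1 / 2 : ℝ) ^ (2 ^ k)) ^ 2 :=
              pow_le_pow_left₀ (h0 _) (ih (by omega) (by omega)) 2
          _ = (1 / 2 : ℝ) ^ (2 ^ (k + 1)) := by
              rw [← pow_mul]; ring_nf
    have := claim (n - 1) le_rfl (by omega)
    have h1 : (⟨n - 1 - (n - 1), by omega⟩ : Fin n) = ⟨0, by omega⟩ := by
      simp [Fin.mk.injEq]
    rw [h1] at this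
    calc x ⟨0, by omega⟩ ≤ (1 / 2 : ℝ) ^ (2 ^ (n - 1)) := this
      _ = ((2 : ℝ) ^ (2 ^ (n - 1)))⁻¹ := by rw [one_div, inv_pow]
  refine ⟨?_, hb, ?_⟩
  · -- Part (a): nonempty interior
    set T : Set (EuclideanSpace ℝ (Fin n)) :=
      {x | (∀ i : Fin n, 0 < x i) ∧
        (∀ i : Fin n, ∀ h : (i : ℕ) + 1 < n, x i < (x ⟨(i : ℕ) + 1, h⟩) ^ 2) ∧
        x ⟨n - 1, by omega⟩ < 1 / 2} with hT
    have hTopen : IsOpen T := by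
      have hTe : T = (⋂ i : Fin n, {x : EuclideanSpace ℝ (Fin n) | 0 < x i}) ∩
          ((⋂ i : Fin n, ⋂ h : (i : ℕ) + 1 < n,
            {x : EuclideanSpace ℝ (Fin n) | x i < (x ⟨(i : ℕ) + 1, h⟩) ^ 2}) ∩
          {x : EuclideanSpace ℝ (Fin n) | x ⟨n - 1, by omega⟩ < 1 / 2}) := by
        ext x
        simp only [hT, Set.mem_setOf_eq, Set.mem_inter_iff, Set.mem_iInter]

      rw [hTe]
      have hc : ∀ i : Fin n, Continuous fun x : EuclideanSpace ℝ (Fin n) => x i :=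
        fun i => (EuclideanSpace.proj i).continuous
      refine IsOpen.inter ?_ (IsOpen.inter ?_ ?_)
      · exact isOpen_iInter_of_finite fun i => isOpen_lt continuous_const (hc i)
      · exact isOpen_iInter_of_finite fun i => isOpen_iInter_of_finite fun h =>
          isOpen_lt (hc i) ((hc _).pow 2)
      · exact isOpen_lt (hc _) continuous_const
    have hTS : T ⊆ S := by
      intro x hx
      rw [hS]
      obtain ⟨h0, hsq, htop⟩ := hx
      exact ⟨fun i => (h0 i).le,
        fun i h => (hsq ⟨i, Nat.lt_of_succ_lt h⟩ h).le, htop.le⟩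
    set pt : EuclideanSpace ℝ (Fin n) := WithLp.toLp 2 (fun i : Fin n => bseq (n - 1 - (i : ℕ))) with hpt
    have hptT : pt ∈ T := by
      refine ⟨fun i => bseq_pos _, ?_, ?_⟩
      · intro i h
        have key : pt i = bseq ((n - 2 - (i : ℕ)) + 1) := by
          have : n - 1 - (i : ℕ) = (n - 2 - (i : ℕ)) + 1 := by omega
          rw [hpt]; simp only []; rw [this]
        have key2 : pt ⟨(i : ℕ) + 1, h⟩ = bseq (n - 2 - (i : ℕ)) := by
          have : n - 1 - ((i : ℕ) + 1) = n - 2 - (i : ℕ) := by omega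
          rw [hpt]; simp only []; rw [this]
        rw [key, key2]
        have hp := bseq_pos (n - 2 - (i : ℕ))
        show bseq (n - 2 - (i : ℕ)) ^ 2 / 2 < bseq (n - 2 - (i : ℕ)) ^ 2
        have : 0 < bseq (n - 2 - (i : ℕ)) ^ 2 := by positivity
        linarith
      · show bseq (n - 1 - (n - 1)) < 1 / 2
        have : n - 1 - (n - 1) = 0 := by omega
        rw [this]
        norm_num [bseq]
    exact ⟨pt, interior_maximal hTS hTopen hptT⟩
  · -- Part (c)
    intro z r hr hball
    set i0 : Fin n := ⟨0, by omega⟩ with hi0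
    set M : ℝ := ((2 : ℝ) ^ (2 ^ (n - 1)))⁻¹ with hM
    have hMpos : 0 < M := by positivity
    have key : ∀ t : ℝ, |t| < r → 0 ≤ z i0 + t ∧ z i0 + t ≤ M := by
      intro t ht
      have hmem : z + EuclideanSpace.single i0 t ∈ ball z r := by
        rw [mem_ball]
        have : dist (z + EuclideanSpace.single i0 t) z = ‖EuclideanSpace.single i0 t‖ := by
          simp [dist_eq_norm]
        rw [this, EuclideanSpace.norm_single]
        simpa using ht
      have := hb _ (hball hmem)
      have hcoord : (z + EuclideanSpace.single i0 t) i0 = z i0 + t := by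
        simp [EuclideanSpace.single_apply]
      rw [hcoord] at this
      exact this
    by_contra hcon
    push_neg at hcon
    have hM2 : ((2 : ℝ) ^ (2 ^ (n - 1) + 1))⁻¹ = M / 2 := by
      rw [hM, pow_succ, mul_inv]
      ring
    rw [hM2] at hcon
    set t : ℝ := (M / 2 + r) / 2 with hts
    have ht1 : M / 2 < t := by rw [hts]; linarith
    have ht2 : t < r := by rw [hts]; linarith
    have ht0 : 0 < t := by linarith
    have habs : |t| < r := by rw [abs_of_pos ht0]; exact ht2
    have habs' : |(-t)| < r := by rw [abs_neg, abs_of_pos ht0]; exact ht2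
    have h1 := (key t habs).2
    have h2 := (key (-t) habs').1
    linarith
end

section
/- Let g_1, …, g_m ∈ ℝ[x_1,…,x_n], let R > 0, and let t ≥ 1 be an integer. Assume that for each i ∈ {1,…,n} the polynomial R² − x_i² belongs to the truncated quadratic module M(g)_2. Then for every α ∈ ℕ^n with |α| ≤ 2t, the polynomial R^{|α|} − x^α belongs to M(g)_{2t}. -/
open MvPolynomial

/-- A polynomial is a sum of squares. -/
def IsSumOfSquares {n : ℕ} (p : MvPolynomial (Fin n) ℝ) : Prop :=
  ∃ (k : ℕ) (s : Fin k → MvPolynomial (Fin n) ℝ), p = ∑ j, (s j) ^ 2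

/-- Membership in the truncated quadratic module `M(g)_{2t}`: `p = σ₀ + Σᵢ σᵢ·gᵢ` with each
`σᵢ` a sum of squares, `deg σ₀ ≤ 2t` and `deg(σᵢ gᵢ) ≤ 2t`. -/
def MemTruncQuadModule {n m : ℕ} (g : Fin m → MvPolynomial (Fin n) ℝ) (t : ℕ)
    (p : MvPolynomial (Fin n) ℝ) : Prop :=
  ∃ σ₀ : MvPolynomial (Fin n) ℝ, ∃ σ : Fin m → MvPolynomial (Fin n) ℝ,
    IsSumOfSquares σ₀ ∧ (∀ i, IsSumOfSquares (σ i)) ∧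
    σ₀.totalDegree ≤ 2 * t ∧ (∀ i, (σ i * g i).totalDegree ≤ 2 * t) ∧
    p = σ₀ + ∑ i, σ i * g i

section Helpers

variable {n m : ℕ} {g : Fin m → MvPolynomial (Fin n) ℝ} {t t' d : ℕ}
  {p q : MvPolynomial (Fin n) ℝ}

lemma sos_zero : IsSumOfSquares (0 : MvPolynomial (Fin n) ℝ) := ⟨0, ![], by simp⟩

lemma sos_sq (p : MvPolynomial (Fin n) ℝ) : IsSumOfSquares (p ^ 2) := ⟨1, ![p], by simp⟩

lemma sos_add (hp : IsSumOfSquares p) (hq : IsSumOfSquares q) : IsSumOfSquares (p + q) := by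
  obtain ⟨k, s, rfl⟩ := hp; obtain ⟨l, u, rfl⟩ := hq
  exact ⟨k + l, Fin.append s u, by rw [Fin.sum_univ_add]; simp⟩

lemma sos_mul (hp : IsSumOfSquares p) (hq : IsSumOfSquares q) : IsSumOfSquares (p * q) := by
  obtain ⟨k, s, rfl⟩ := hp; obtain ⟨l, u, rfl⟩ := hq
  refine ⟨k * l, fun x => s (finProdFinEquiv.symm x).1 * u (finProdFinEquiv.symm x).2, ?_⟩
  rw [Finset.sum_mul_sum,
    ← Equiv.sum_comp finProdFinEquiv (fun x : Fin (k * l) =>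
      (s (finProdFinEquiv.symm x).1 * u (finProdFinEquiv.symm x).2) ^ 2)]
  simp [Fintype.sum_prod_type, mul_pow]

lemma sos_C {c : ℝ} (hc : 0 ≤ c) : IsSumOfSquares (C c : MvPolynomial (Fin n) ℝ) := by
  refine ⟨1, ![C (Real.sqrt c)], ?_⟩
  simp [← C_pow, Real.sq_sqrt hc]

lemma mem_zero : MemTruncQuadModule g t 0 :=
  ⟨0, 0, sos_zero, fun _ => sos_zero, by simp, fun i => by simp, by simp⟩

lemma mem_sos (hq : IsSumOfSquares q) (hd : q.totalDegree ≤ 2 * t) :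
    MemTruncQuadModule g t q :=
  ⟨q, 0, hq, fun _ => sos_zero, hd, fun i => by simp, by simp⟩

lemma mem_add (hp : MemTruncQuadModule g t p) (hq : MemTruncQuadModule g t q) :
    MemTruncQuadModule g t (p + q) := by
  obtain ⟨a, s, ha, hs, hda, hds, rfl⟩ := hp
  obtain ⟨b, u, hb, hu, hdb, hdu, rfl⟩ := hq
  refine ⟨a + b, fun i => s i + u i, sos_add ha hb, fun i => sos_add (hs i) (hu i), ?_, ?_, ?_⟩
  · exact le_trans (totalDegree_add _ _) (max_le hda hdb)
  · intro i
    rw [add_mul]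
    exact le_trans (totalDegree_add _ _) (max_le (hds i) (hdu i))
  · simp only [add_mul, Finset.sum_add_distrib]
    ring

lemma mem_mul_sos (hq : IsSumOfSquares q) (hdq : q.totalDegree ≤ 2 * d)
    (hp : MemTruncQuadModule g t' p) (h : d + t' ≤ t) :
    MemTruncQuadModule g t (q * p) := by
  obtain ⟨a, s, ha, hs, hda, hds, rfl⟩ := hp
  have key : ∀ r : MvPolynomial (Fin n) ℝ, r.totalDegree ≤ 2 * t' →
      (q * r).totalDegree ≤ 2 * t := by
    intro r hr
    calc (q * r).totalDegree ≤ q.totalDegree + r.totalDegree := totalDegree_mul _ _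
      _ ≤ 2 * d + 2 * t' := Nat.add_le_add hdq hr
      _ ≤ 2 * t := by omega
  refine ⟨q * a, fun i => q * s i, sos_mul hq ha, fun i => sos_mul hq (hs i), key a hda,
    fun i => ?_, ?_⟩
  · rw [mul_assoc]; exact key _ (hds i)
  · rw [mul_add, Finset.mul_sum]
    simp [mul_assoc]

lemma mem_mono (h : t' ≤ t) (hp : MemTruncQuadModule g t' p) : MemTruncQuadModule g t p := by
  obtain ⟨a, s, ha, hs, hda, hds, rfl⟩ := hp
  exact ⟨a, s, ha, hs, le_trans hda (by omega), fun i => le_trans (hds i) (by omega), rfl⟩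

lemma mem_smul {c : ℝ} (hc : 0 ≤ c) (hp : MemTruncQuadModule g t p) :
    MemTruncQuadModule g t (C c * p) :=
  mem_mul_sos (sos_C hc) (d := 0) (by simp) hp (by omega)

lemma weight_apply_le (α : Fin n →₀ ℕ) (i : Fin n) : α i ≤ α.sum fun _ e => e := by
  by_cases h : i ∈ α.support
  · exact Finset.single_le_sum (f := fun j => α j) (fun _ _ => Nat.zero_le _) h
  · simp [Finsupp.notMem_support_iff.mp h]

lemma weight_eq_zero {α : Fin n →₀ ℕ} (h : (α.sum fun _ e => e) = 0) : α = 0 := by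
  ext i
  have := weight_apply_le α i
  simp only [Finsupp.coe_zero, Pi.zero_apply]
  omega

lemma exists_decomp {α : Fin n →₀ ℕ} (h : α ≠ 0) :
    ∃ (i : Fin n) (β : Fin n →₀ ℕ), α = Finsupp.single i 1 + β ∧
      (β.sum fun _ e => e) + 1 = α.sum fun _ e => e := by
  obtain ⟨i, hi⟩ : ∃ i, α i ≠ 0 := by
    by_contra hc
    push_neg at hc
    exact h (Finsupp.ext hc)
  have hle : Finsupp.single i 1 ≤ α := by
    rw [Finsupp.single_le_iff]
    omega
  refine ⟨i, α - Finsupp.single i 1, (add_tsub_cancel_of_le hle).symm, ?_⟩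
  have hadd : α = Finsupp.single i 1 + (α - Finsupp.single i 1) := (add_tsub_cancel_of_le hle).symm
  conv_rhs => rw [hadd]
  rw [Finsupp.sum_add_index' (fun _ => rfl) (fun _ _ _ => rfl), Finsupp.sum_single_index rfl]
  omega

lemma deg_sub_le (p q : MvPolynomial (Fin n) ℝ) :
    (p - q).totalDegree ≤ max p.totalDegree q.totalDegree := by
  rw [sub_eq_add_neg]
  exact (totalDegree_add _ _).trans (by rw [totalDegree_neg])

lemma cancel_helper {c : ℝ} (hc : c ≠ 0) {p q : MvPolynomial (Fin n) ℝ}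
    (h : C c * p = q) : p = C c⁻¹ * q := by
  rw [← h, ← mul_assoc, ← C_mul, inv_mul_cancel₀ hc, C_1, one_mul]

lemma key_induction (g : Fin m → MvPolynomial (Fin n) ℝ) (R : ℝ) (hR : 0 < R)
    (hcoord : ∀ i : Fin n, MemTruncQuadModule g 1 (C (R ^ 2) - X i ^ 2)) :
    ∀ (k t : ℕ) (α : Fin n →₀ ℕ), (α.sum fun _ e => e) = k → k ≤ 2 * t →
      MemTruncQuadModule g t (C (R ^ k) - monomial α 1) ∧
      MemTruncQuadModule g t (C (R ^ k) + monomial α 1) := by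
  intro k
  induction k using Nat.strong_induction_on with
  | _ k IH =>
    intro t α hα hk
    obtain rfl | rfl | ⟨k', rfl⟩ : k = 0 ∨ k = 1 ∨ ∃ k', k = k' + 2 := by
      rcases Nat.lt_or_ge k 2 with h | h
      · interval_cases k
        · exact Or.inl rfl
        · exact Or.inr (Or.inl rfl)
      · exact Or.inr (Or.inr ⟨k - 2, by omega⟩)
    · -- k = 0
      have h0 : α = 0 := weight_eq_zero hα
      subst h0
      constructor
      · have : C (R ^ 0) - monomial (0 : Fin n →₀ ℕ) (1:ℝ) = 0 := by
          simp [monomial_zero']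
        rw [this]; exact mem_zero
      · have : C (R ^ 0) + monomial (0 : Fin n →₀ ℕ) (1:ℝ) = C 2 := by
          rw [monomial_zero', pow_zero, C_1, map_ofNat]
          norm_num
        rw [this]
        exact mem_sos (sos_C (by norm_num)) (by simp)
    · -- k = 1
      have ht1 : 1 ≤ t := by omega
      have hne : α ≠ 0 := fun h => by simp [h, Finsupp.sum_zero_index] at hα
      obtain ⟨i, β, hdec, hw⟩ := exists_decomp hne
      have hβ : β = 0 := weight_eq_zero (by omega)
      subst hβ
      rw [add_zero] at hdec
      subst hdec
      have hmono : (monomial (Finsupp.single i 1) (1:ℝ) : MvPolynomial (Fin n) ℝ) = X i := rfl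
      rw [hmono, pow_one]
      have h2R : (2 * R) ≠ 0 := by positivity
      constructor
      · have heq : C (2 * R) * (C R - X i) =
            (C (R ^ 2) - X i ^ 2) + (C R - X i) ^ 2 := by
          rw [C_mul, C_pow]
          rw [show (C (2:ℝ) : MvPolynomial (Fin n) ℝ) = 2 from map_ofNat C 2]; ring
        rw [cancel_helper h2R heq]
        refine mem_smul (by positivity) (mem_add (mem_mono (t' := 1) ht1 (hcoord i)) (mem_sos (sos_sq _) ?_))
        have hd : (C R - X i : MvPolynomial (Fin n) ℝ).totalDegree ≤ 1 :=
          (deg_sub_le _ _).trans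
            (max_le ((totalDegree_C R).le.trans (Nat.zero_le 1)) (totalDegree_X i).le)
        calc ((C R - X i) ^ 2).totalDegree ≤ 2 * (C R - X i).totalDegree := totalDegree_pow _ _
          _ ≤ 2 * t := by omega
      · have heq : C (2 * R) * (C R + X i) =
            (C (R ^ 2) - X i ^ 2) + (C R + X i) ^ 2 := by
          rw [C_mul, C_pow]
          rw [show (C (2:ℝ) : MvPolynomial (Fin n) ℝ) = 2 from map_ofNat C 2]; ring
        rw [cancel_helper h2R heq]
        refine mem_smul (by positivity) (mem_add (mem_mono (t' := 1) ht1 (hcoord i)) (mem_sos (sos_sq _) ?_))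
        have hd : (C R + X i : MvPolynomial (Fin n) ℝ).totalDegree ≤ 1 :=
          (totalDegree_add _ _).trans
            (max_le ((totalDegree_C R).le.trans (Nat.zero_le 1)) (totalDegree_X i).le)
        calc ((C R + X i) ^ 2).totalDegree ≤ 2 * (C R + X i).totalDegree := totalDegree_pow _ _
          _ ≤ 2 * t := by omega
    · -- k = k' + 2
      obtain ⟨t'', rfl⟩ : ∃ t'', t = t'' + 1 := by
        refine ⟨t - 1, ?_⟩; omega
      have hne : α ≠ 0 := fun h => by simp [h, Finsupp.sum_zero_index] at hα
      obtain ⟨i, α₁, hdec₁, hw₁⟩ := exists_decomp hne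
      have hne₁ : α₁ ≠ 0 := fun h => by
        subst h; simp [Finsupp.sum_zero_index] at hw₁; omega
      obtain ⟨j, γ, hdec₂, hw₂⟩ := exists_decomp hne₁
      have hγ : (γ.sum fun _ e => e) = k' := by omega
      have IHγ := IH k' (by omega) t'' γ hγ (by omega)
      -- monomial decomposition
      have hmono : (monomial α (1:ℝ) : MvPolynomial (Fin n) ℝ) =
          X i * (X j * monomial γ 1) := by
        rw [hdec₁, hdec₂]
        simp [X, monomial_mul]
      -- degree bounds for the quadratic SOS factors
      have hdegp : ((X i + X j : MvPolynomial (Fin n) ℝ) ^ 2).totalDegree ≤ 2 * 1 := by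
        calc ((X i + X j : MvPolynomial (Fin n) ℝ) ^ 2).totalDegree
            ≤ 2 * (X i + X j : MvPolynomial (Fin n) ℝ).totalDegree := totalDegree_pow _ _
          _ ≤ 2 * 1 := by
              have := (totalDegree_add (X i : MvPolynomial (Fin n) ℝ) (X j)).trans
                (max_le (totalDegree_X i).le (totalDegree_X j).le)
              omega
      have hdegm : ((X i - X j : MvPolynomial (Fin n) ℝ) ^ 2).totalDegree ≤ 2 * 1 := by
        calc ((X i - X j : MvPolynomial (Fin n) ℝ) ^ 2).totalDegree
            ≤ 2 * (X i - X j : MvPolynomial (Fin n) ℝ).totalDegree := totalDegree_pow _ _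
          _ ≤ 2 * 1 := by
              have := (deg_sub_le (X i : MvPolynomial (Fin n) ℝ) (X j)).trans
                (max_le (totalDegree_X i).le (totalDegree_X j).le)
              omega
      have hthird : MemTruncQuadModule g (t'' + 1)
          (C (2 * R ^ k') * ((C (R ^ 2) - X i ^ 2) + (C (R ^ 2) - X j ^ 2))) :=
        mem_smul (by positivity) (mem_mono (t' := 1) (by omega) (mem_add (hcoord i) (hcoord j)))
      have hC4 : (4 : ℝ) ≠ 0 := by norm_num
      constructor
      · set q : MvPolynomial (Fin n) ℝ :=
          (X i + X j) ^ 2 * (C (R ^ k') - monomial γ 1) +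
          ((X i - X j) ^ 2 * (C (R ^ k') + monomial γ 1) +
          C (2 * R ^ k') * ((C (R ^ 2) - X i ^ 2) + (C (R ^ 2) - X j ^ 2))) with hq
        have heq : C (4:ℝ) * (C (R ^ (k' + 2)) - monomial α 1) = q := by
          rw [hq, hmono]
          rw [show R ^ (k' + 2) = R ^ 2 * R ^ k' by ring]
          rw [C_mul, C_mul, C_pow]
          rw [show (C (2:ℝ) : MvPolynomial (Fin n) ℝ) = 2 from map_ofNat C 2,
            show (C (4:ℝ) : MvPolynomial (Fin n) ℝ) = 4 from map_ofNat C 4]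
          ring
        rw [cancel_helper hC4 heq]
        refine mem_smul (by norm_num) (mem_add ?_ (mem_add ?_ hthird))
        · exact mem_mul_sos (sos_sq _) hdegp IHγ.1 (by omega)
        · exact mem_mul_sos (sos_sq _) hdegm IHγ.2 (by omega)
      · set q : MvPolynomial (Fin n) ℝ :=
          (X i + X j) ^ 2 * (C (R ^ k') + monomial γ 1) +
          ((X i - X j) ^ 2 * (C (R ^ k') - monomial γ 1) +
          C (2 * R ^ k') * ((C (R ^ 2) - X i ^ 2) + (C (R ^ 2) - X j ^ 2))) with hq
        have heq : C (4:ℝ) * (C (R ^ (k' + 2)) + monomial α 1) = q := by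
          rw [hq, hmono]
          rw [show R ^ (k' + 2) = R ^ 2 * R ^ k' by ring]
          rw [C_mul, C_mul, C_pow]
          rw [show (C (2:ℝ) : MvPolynomial (Fin n) ℝ) = 2 from map_ofNat C 2,
            show (C (4:ℝ) : MvPolynomial (Fin n) ℝ) = 4 from map_ofNat C 4]
          ring
        rw [cancel_helper hC4 heq]
        refine mem_smul (by norm_num) (mem_add ?_ (mem_add ?_ hthird))
        · exact mem_mul_sos (sos_sq _) hdegp IHγ.2 (by omega)
        · exact mem_mul_sos (sos_sq _) hdegm IHγ.1 (by omega)

end Helpers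

/-- if `R² − xᵢ² ∈ M(g)₂` for all `i`, then `R^{|α|} − x^α ∈ M(g)_{2t}`
for all `|α| ≤ 2t`. -/
theorem pow_sub_monomial_mem_truncQuadModule
    (n m : ℕ) (hn : 1 ≤ n) (hm : 1 ≤ m)
    (g : Fin m → MvPolynomial (Fin n) ℝ) (R : ℝ) (hR : 0 < R)
    (t : ℕ) (ht : 1 ≤ t)
    (hcoord : ∀ i : Fin n, MemTruncQuadModule g 1 (C (R ^ 2) - X i ^ 2)) :
    ∀ α : Fin n →₀ ℕ, (α.sum fun _ e => e) ≤ 2 * t →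
      MemTruncQuadModule g t (C (R ^ (α.sum fun _ e => e)) - monomial α 1) := by
  intro α hα
  exact (key_induction g R hR hcoord _ t α rfl hα).1
end

section
/- Let g_1, …, g_m ∈ ℝ[x_1,…,x_n] with m ≥ 1, let R > 0, and suppose that one of the polynomials g_i equals R² − Σ_{j=1}^n x_j². Then for every integer t ≥ 1 and every polynomial f ∈ ℝ[x_1,…,x_n] of degree at most 2t, there exists λ ∈ ℝ such that f − λ belongs to the truncated quadratic module M(g)_{2t}. -/
open MvPolynomial

namespace Aux


variable {n m : ℕ}

lemma sos_zero : IsSumOfSquares (0 : MvPolynomial (Fin n) ℝ) :=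
  ⟨0, fun j => 0, by simp⟩

lemma sos_sq (s : MvPolynomial (Fin n) ℝ) : IsSumOfSquares (s ^ 2) :=
  ⟨1, fun _ => s, by simp⟩

lemma sos_add {p q : MvPolynomial (Fin n) ℝ} (hp : IsSumOfSquares p)
    (hq : IsSumOfSquares q) : IsSumOfSquares (p + q) := by
  obtain ⟨k, s, rfl⟩ := hp
  obtain ⟨k', s', rfl⟩ := hq
  refine ⟨k + k', Fin.append s s', ?_⟩
  rw [Fin.sum_univ_add]
  simp [Fin.append_left, Fin.append_right]

lemma sos_smul {p : MvPolynomial (Fin n) ℝ} {c : ℝ} (hc : 0 ≤ c)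
    (hp : IsSumOfSquares p) : IsSumOfSquares (C c * p) := by
  obtain ⟨k, s, rfl⟩ := hp
  refine ⟨k, fun j => C (Real.sqrt c) * s j, ?_⟩
  rw [Finset.mul_sum]
  congr 1; funext j
  rw [mul_pow, ← C_pow, Real.sq_sqrt hc]


variable {n m : ℕ}

variable {g : Fin m → MvPolynomial (Fin n) ℝ} {t : ℕ}

lemma mem_zero : MemTruncQuadModule g t 0 := by
  refine ⟨0, fun _ => 0, sos_zero, fun _ => sos_zero, by simp, fun i => by simp, by simp⟩

lemma mem_add {p q : MvPolynomial (Fin n) ℝ} (hp : MemTruncQuadModule g t p)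
    (hq : MemTruncQuadModule g t q) : MemTruncQuadModule g t (p + q) := by
  obtain ⟨a, σ, ha, hσ, hda, hdσ, rfl⟩ := hp
  obtain ⟨b, τ, hb, hτ, hdb, hdτ, rfl⟩ := hq
  refine ⟨a + b, fun i => σ i + τ i, sos_add ha hb, fun i => sos_add (hσ i) (hτ i), ?_, ?_, ?_⟩
  · exact le_trans (totalDegree_add a b) (max_le hda hdb)
  · intro i
    rw [add_mul]
    exact le_trans (totalDegree_add _ _) (max_le (hdσ i) (hdτ i))
  · simp [add_mul, Finset.sum_add_distrib]; ring
  
lemma mem_sq {s : MvPolynomial (Fin n) ℝ} (hs : s.totalDegree ≤ t) :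
    MemTruncQuadModule g t (s ^ 2) := by
  refine ⟨s ^ 2, fun _ => 0, sos_sq s, fun _ => sos_zero, ?_, fun i => by simp, by simp⟩
  calc (s ^ 2).totalDegree ≤ 2 * s.totalDegree := totalDegree_pow s 2
    _ ≤ 2 * t := by omega

lemma mem_sq_mul {s : MvPolynomial (Fin n) ℝ} (i₀ : Fin m)
    (h : (s ^ 2 * g i₀).totalDegree ≤ 2 * t) :
    MemTruncQuadModule g t (s ^ 2 * g i₀) := by
  classical
  refine ⟨0, fun i => if i = i₀ then s ^ 2 else 0, sos_zero, ?_, by simp, ?_, ?_⟩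
  · intro i; by_cases hi : i = i₀ <;> simp [hi, sos_sq, sos_zero]
  · intro i; by_cases hi : i = i₀ <;> simp [hi, h]
  · simp only [ite_mul, zero_mul, Finset.sum_ite_eq', Finset.mem_univ, if_true, zero_add]

lemma mem_smul {p : MvPolynomial (Fin n) ℝ} {c : ℝ} (hc : 0 ≤ c)
    (hp : MemTruncQuadModule g t p) : MemTruncQuadModule g t (C c * p) := by
  obtain ⟨a, σ, ha, hσ, hda, hdσ, rfl⟩ := hp
  refine ⟨C c * a, fun i => C c * σ i, sos_smul hc ha, fun i => sos_smul hc (hσ i), ?_, ?_, ?_⟩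
  · exact le_trans (totalDegree_mul _ _) (by simpa using hda)
  · intro i
    rw [mul_assoc]
    exact le_trans (totalDegree_mul _ _) (by simpa using hdσ i)
  · rw [mul_add, Finset.mul_sum]
    exact congrArg _ (Finset.sum_congr rfl fun i _ => by ring)

lemma mem_sum {ι : Type*} (S : Finset ι) (f : ι → MvPolynomial (Fin n) ℝ)
    (h : ∀ i ∈ S, MemTruncQuadModule g t (f i)) :
    MemTruncQuadModule g t (∑ i ∈ S, f i) :=
  Finset.sum_induction f _ (fun _ _ => mem_add) mem_zero h


variable {n m : ℕ} {g : Fin m → MvPolynomial (Fin n) ℝ} {t : ℕ}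

/-- degree additivity for finsupp sums -/
lemma fdeg_add (β γ : Fin n →₀ ℕ) :
    ((β + γ).sum fun _ e => e) = (β.sum fun _ e => e) + (γ.sum fun _ e => e) :=
  Finsupp.sum_add_index' (fun _ => rfl) (fun _ _ _ => rfl)

lemma exists_le_deg (α : Fin n →₀ ℕ) :
    ∀ k : ℕ, k ≤ (α.sum fun _ e => e) → ∃ β : Fin n →₀ ℕ, β ≤ α ∧ (β.sum fun _ e => e) = k := by
  intro k
  induction k with
  | zero => intro _; exact ⟨0, zero_le, by simp⟩
  | succ k ih =>
    intro hk
    obtain ⟨β, hβle, hβd⟩ := ih (by omega)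
    have : ∃ j, β j < α j := by
      by_contra hcon
      push_neg at hcon
      have : β = α := le_antisymm hβle (Finsupp.le_def.mpr hcon)
      rw [this] at hβd
      omega
    obtain ⟨j, hj⟩ := this
    refine ⟨β + Finsupp.single j 1, ?_, ?_⟩
    · intro l
      rcases eq_or_ne l j with rfl | hl
      · simpa using hj
      · simpa [Finsupp.single_apply, Ne.symm hl] using hβle l
    · rw [fdeg_add, hβd]
      simp

lemma totalDegree_g_le {R : ℝ} (i₀ : Fin m) (hg : g i₀ = C (R ^ 2) - ∑ j : Fin n, X j ^ 2) :
    (g i₀).totalDegree ≤ 2 := by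
  rw [hg, sub_eq_add_neg]
  refine le_trans (totalDegree_add _ _) (max_le ((totalDegree_C _).trans_le (by omega)) ?_)
  rw [totalDegree_neg]
  refine le_trans (totalDegree_finset_sum _ _) (Finset.sup_le fun j _ => ?_)
  exact le_trans (totalDegree_pow _ _) (by simp)

lemma mem_ball_pow {R : ℝ} (i₀ : Fin m) (hg : g i₀ = C (R ^ 2) - ∑ j : Fin n, X j ^ 2) :
    ∀ k : ℕ, ∀ β : Fin n →₀ ℕ, (β.sum fun _ e => e) = k → k ≤ t →
      MemTruncQuadModule g t (C (R ^ (2 * k)) - (monomial β 1) ^ 2) := by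
  intro k
  induction k with
  | zero =>
    intro β hβ _
    have hβ0 : β = 0 := by
      ext j
      simp only [Finsupp.coe_zero, Pi.zero_apply]
      by_contra hj
      have hmem : j ∈ β.support := Finsupp.mem_support_iff.mpr (by simpa using hj)
      have : β j ≤ β.sum fun _ e => e := Finset.single_le_sum (fun _ _ => Nat.zero_le _) hmem
      omega
    subst hβ0
    have : C (R ^ (2 * 0)) - (monomial (0 : Fin n →₀ ℕ) (1:ℝ)) ^ 2 = 0 := by
      simp [monomial_zero']
    rw [this]; exact mem_zero
  | succ k ih =>
    intro β hβ hk
    -- find a coordinate where β is positive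
    have hβne : β ≠ 0 := by
      intro h; subst h; simp at hβ
    obtain ⟨j, hj⟩ := Finsupp.support_nonempty_iff.mpr hβne
    have hjpos : 1 ≤ β j := Nat.one_le_iff_ne_zero.mpr (Finsupp.mem_support_iff.mp hj)
    set β' : Fin n →₀ ℕ := β - Finsupp.single j 1 with hβ'
    have hsingle_le : Finsupp.single j 1 ≤ β := Finsupp.single_le_iff.mpr hjpos
    have hsum : β' + Finsupp.single j 1 = β := tsub_add_cancel_of_le hsingle_le
    have hβ'd : (β'.sum fun _ e => e) = k := by
      have := fdeg_add β' (Finsupp.single j 1)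
      rw [hsum] at this
      simp [Finsupp.sum_single_index] at this
      omega
    set u : MvPolynomial (Fin n) ℝ := monomial β' 1 with hu
    have hud : u.totalDegree = k := by rw [hu, totalDegree_monomial _ (one_ne_zero)]; exact hβ'd
    have hmono : monomial β (1:ℝ) = u * X j := by
      rw [hu, X, monomial_mul, hsum, one_mul]
    -- the decomposition
    have key : C (R ^ (2 * (k+1))) - (monomial β 1) ^ 2 =
        C (R ^ 2) * (C (R ^ (2 * k)) - u ^ 2) + u ^ 2 * g i₀ +
          ∑ l ∈ Finset.univ.erase j, (u * X l) ^ 2 := by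
      rw [hg, hmono]
      rw [← Finset.add_sum_erase _ (fun l => X l ^ 2) (Finset.mem_univ j)]
      simp only [map_pow]
      have : ∀ S : Finset (Fin n), ∑ l ∈ S, (u * X l) ^ 2 = u^2 * ∑ l ∈ S, X l ^ 2 := by
        intro S; rw [Finset.mul_sum]; exact Finset.sum_congr rfl fun l _ => by ring
      rw [this]
      ring
    rw [key]
    refine mem_add (mem_add ?_ ?_) ?_
    · exact mem_smul (sq_nonneg R) (ih β' hβ'd (by omega))
    · refine mem_sq_mul i₀ (le_trans (totalDegree_mul _ _) ?_)
      have h1 : (u ^ 2).totalDegree ≤ 2 * k := le_trans (totalDegree_pow _ _) (by omega)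
      have h2 := totalDegree_g_le i₀ hg
      omega
    · refine mem_sum _ _ fun l _ => mem_sq (le_trans (totalDegree_mul _ _) ?_)
      have : (X l : MvPolynomial (Fin n) ℝ).totalDegree = 1 := totalDegree_X l
      omega


variable {n m : ℕ} {g : Fin m → MvPolynomial (Fin n) ℝ} {t : ℕ}

lemma mem_monomial {R : ℝ} (i₀ : Fin m) (hg : g i₀ = C (R ^ 2) - ∑ j : Fin n, X j ^ 2)
    (α : Fin n →₀ ℕ) (hα : (α.sum fun _ e => e) ≤ 2 * t) (a : ℝ) :
    ∃ lam : ℝ, MemTruncQuadModule g t (monomial α a - C lam) := by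
  obtain ⟨β, hβle, hβd⟩ := exists_le_deg α ((α.sum fun _ e => e) / 2) (Nat.div_le_self _ _)
  set γ : Fin n →₀ ℕ := α - β with hγ
  have hβγ : β + γ = α := add_tsub_cancel_of_le hβle
  have hγd : (γ.sum fun _ e => e) = (α.sum fun _ e => e) - (α.sum fun _ e => e) / 2 := by
    have := fdeg_add β γ
    rw [hβγ] at this
    omega
  set kb := (β.sum fun _ e => e) with hkb
  set kg := (γ.sum fun _ e => e) with hkg
  have hkbt : kb ≤ t := by omega
  have hkgt : kg ≤ t := by omega
  set u : MvPolynomial (Fin n) ℝ := monomial β 1 with hu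
  set v : MvPolynomial (Fin n) ℝ := monomial γ 1 with hv
  have hud : u.totalDegree ≤ t := by rw [hu, totalDegree_monomial _ one_ne_zero]; omega
  have hvd : v.totalDegree ≤ t := by rw [hv, totalDegree_monomial _ one_ne_zero]; omega
  have huv : u * v = monomial α 1 := by rw [hu, hv, monomial_mul, hβγ, one_mul]
  have hmb := mem_ball_pow i₀ hg kb β hkb.symm hkbt
  have hmg := mem_ball_pow i₀ hg kg γ hkg.symm hkgt
  have hma : monomial α a = C a * (u * v) := by rw [huv, C_mul_monomial, mul_one]
  rcases le_or_gt 0 a with ha | ha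
  · refine ⟨-(a / 2) * (R ^ (2 * kb) + R ^ (2 * kg)), ?_⟩
    have h2 : 0 ≤ a / 2 := by linarith
    have hdec : monomial α a - C (-(a / 2) * (R ^ (2 * kb) + R ^ (2 * kg))) =
        C (a/2) * (u + v) ^ 2 + (C (a/2) * (C (R ^ (2*kb)) - u ^ 2)
          + C (a/2) * (C (R ^ (2*kg)) - v ^ 2)) := by
      rw [hma]
      have hCa : (C a : MvPolynomial (Fin n) ℝ) = C (a/2) + C (a/2) := by
        rw [← map_add]; norm_num
      have hClam : (C (-(a / 2) * (R ^ (2 * kb) + R ^ (2 * kg))) : MvPolynomial (Fin n) ℝ)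
          = -(C (a/2) * (C (R ^ (2*kb)) + C (R ^ (2*kg)))) := by
        rw [← map_add, ← map_mul, ← map_neg, neg_mul]
      rw [hCa, hClam]
      ring
    rw [hdec]
    exact mem_add (mem_smul h2 (mem_sq (le_trans (totalDegree_add u v) (max_le hud hvd))))
      (mem_add (mem_smul h2 hmb) (mem_smul h2 hmg))
  · refine ⟨(a / 2) * (R ^ (2 * kb) + R ^ (2 * kg)), ?_⟩
    have h2 : 0 ≤ -(a / 2) := by linarith
    have hdec : monomial α a - C ((a / 2) * (R ^ (2 * kb) + R ^ (2 * kg))) =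
        C (-(a/2)) * (u - v) ^ 2 + (C (-(a/2)) * (C (R ^ (2*kb)) - u ^ 2)
          + C (-(a/2)) * (C (R ^ (2*kg)) - v ^ 2)) := by
      rw [hma]
      have hCa : (C a : MvPolynomial (Fin n) ℝ) = -(C (-(a/2)) + C (-(a/2))) := by
        rw [← map_add, ← map_neg]; norm_num
      have hClam : (C ((a / 2) * (R ^ (2 * kb) + R ^ (2 * kg))) : MvPolynomial (Fin n) ℝ)
          = -(C (-(a/2)) * (C (R ^ (2*kb)) + C (R ^ (2*kg)))) := by
        rw [← map_add, ← map_mul, ← map_neg, neg_mul, neg_neg]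
      rw [hCa, hClam]
      ring
    rw [hdec]
    exact mem_add (mem_smul h2 (mem_sq (le_trans (totalDegree_sub u v) (max_le hud hvd))))
      (mem_add (mem_smul h2 hmb) (mem_smul h2 hmg))

lemma mem_sum_lam {ι : Type*} (S : Finset ι) (f : ι → MvPolynomial (Fin n) ℝ)
    (h : ∀ i ∈ S, ∃ lam : ℝ, MemTruncQuadModule g t (f i - C lam)) :
    ∃ lam : ℝ, MemTruncQuadModule g t ((∑ i ∈ S, f i) - C lam) := by
  classical
  induction S using Finset.induction_on with
  | empty => exact ⟨0, by simpa using (mem_zero : MemTruncQuadModule g t 0)⟩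
  | @insert i S hnotmem ih =>
    obtain ⟨lam, hlam⟩ := h i (Finset.mem_insert_self i S)
    obtain ⟨lam', hlam'⟩ := ih fun j hj => h j (Finset.mem_insert_of_mem hj)
    refine ⟨lam + lam', ?_⟩
    have : (∑ j ∈ insert i S, f j) - C (lam + lam')
        = (f i - C lam) + ((∑ j ∈ S, f j) - C lam') := by
      rw [Finset.sum_insert hnotmem, map_add]; ring
    rw [this]
    exact mem_add hlam hlam'


end Aux

/-- for explicitly bounded constraint sets (one `gᵢ` equals
`R² − Σⱼ xⱼ²`), for every `t ≥ 1` and every `f` of degree at most `2t` there is a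
`λ ∈ ℝ` with `f − λ ∈ M(g)_{2t}` (feasibility of the SOS relaxation). -/
theorem explicitly_bounded_sos_feasible
    (n m : ℕ) (hn : 1 ≤ n) (hm : 1 ≤ m)
    (g : Fin m → MvPolynomial (Fin n) ℝ) (R : ℝ) (hR : 0 < R)
    (hball : ∃ i : Fin m, g i = C (R ^ 2) - ∑ j : Fin n, X j ^ 2) :
    ∀ t : ℕ, 1 ≤ t → ∀ f : MvPolynomial (Fin n) ℝ, f.totalDegree ≤ 2 * t →
      ∃ lam : ℝ, MemTruncQuadModule g t (f - C lam) := by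
  obtain ⟨i₀, hg⟩ := hball
  intro t ht f hf
  obtain ⟨lam, h⟩ := Aux.mem_sum_lam (g := g) (t := t) f.support
    (fun α => monomial α (coeff α f)) (fun α hα =>
      Aux.mem_monomial i₀ hg α (le_trans (le_totalDegree hα) hf) (coeff α f))
  rw [support_sum_monomial_coeff] at h
  exact ⟨lam, h⟩
end

section
/- Let N ≥ 1, let X₀ and E be symmetric N×N real matrices, and let r > 0. Suppose that X₀ is positive semidefinite, that every nonzero eigenvalue of X₀ is at least r (i.e., for every real λ ≠ 0 with X₀v = λv for some nonzero v one has λ ≥ r), that the Frobenius norm of E satisfies ‖E‖_F ≤ r/2, and that the kernel of X₀ is contained in the kernel of X₀ + E (i.e., X₀v = 0 implies (X₀ + E)v = 0). Then X₀ + E is positive semidefinite and every nonzero eigenvalue of X₀ + E is at least r/2. -/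
open Matrix Finset in
lemma quad_form_abs_le {N : ℕ} (E : Matrix (Fin N) (Fin N) ℝ) (v : Fin N → ℝ) :
    |v ⬝ᵥ (E *ᵥ v)| ≤ Real.sqrt (∑ i, ∑ j, (E i j) ^ 2) * (v ⬝ᵥ v) := by
  set S := ∑ i, ∑ j, (E i j) ^ 2 with hS
  have hSnn : 0 ≤ S := Finset.sum_nonneg fun i _ => Finset.sum_nonneg fun j _ => sq_nonneg _
  have hvv : v ⬝ᵥ v = ∑ i, v i ^ 2 := by simp [dotProduct, sq]
  have hvnn : 0 ≤ ∑ i, v i ^ 2 := Finset.sum_nonneg fun i _ => sq_nonneg _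
  have h1 : (v ⬝ᵥ (E *ᵥ v)) ^ 2 ≤ (∑ i, v i ^ 2) * ∑ i, (E *ᵥ v) i ^ 2 :=
    Finset.sum_mul_sq_le_sq_mul_sq univ v (E *ᵥ v)
  have h2 : ∑ i, (E *ᵥ v) i ^ 2 ≤ S * ∑ j, v j ^ 2 := by
    rw [hS, Finset.sum_mul]
    refine Finset.sum_le_sum fun i _ => ?_
    exact Finset.sum_mul_sq_le_sq_mul_sq univ (fun j => E i j) v
  have h3 : (v ⬝ᵥ (E *ᵥ v)) ^ 2 ≤ S * (∑ i, v i ^ 2) ^ 2 := by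
    calc (v ⬝ᵥ (E *ᵥ v)) ^ 2 ≤ (∑ i, v i ^ 2) * (S * ∑ j, v j ^ 2) :=
          h1.trans (by exact mul_le_mul_of_nonneg_left h2 hvnn)
      _ = S * (∑ i, v i ^ 2) ^ 2 := by ring
  calc |v ⬝ᵥ (E *ᵥ v)| = Real.sqrt ((v ⬝ᵥ (E *ᵥ v)) ^ 2) := (Real.sqrt_sq_eq_abs _).symm
    _ ≤ Real.sqrt (S * (∑ i, v i ^ 2) ^ 2) := Real.sqrt_le_sqrt h3
    _ = Real.sqrt S * (∑ i, v i ^ 2) := by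
        rw [Real.sqrt_mul hSnn, Real.sqrt_sq hvnn]
    _ = Real.sqrt S * (v ⬝ᵥ v) := by rw [hvv]

open Matrix in
lemma dot_sum_right {N : ℕ} {ι : Type*} (a : Fin N → ℝ) (S : Finset ι) (f : ι → Fin N → ℝ) :
    a ⬝ᵥ (∑ j ∈ S, f j) = ∑ j ∈ S, a ⬝ᵥ f j := by
  simp only [dotProduct, Finset.sum_apply, Finset.mul_sum]
  exact Finset.sum_comm

open Matrix in
lemma dot_sum_left {N : ℕ} {ι : Type*} (a : Fin N → ℝ) (S : Finset ι) (f : ι → Fin N → ℝ) :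
    (∑ j ∈ S, f j) ⬝ᵥ a = ∑ j ∈ S, f j ⬝ᵥ a := by
  rw [dotProduct_comm, dot_sum_right]
  exact Finset.sum_congr rfl fun j _ => dotProduct_comm _ _

open Matrix in
lemma mulVec_sum' {N : ℕ} {ι : Type*} (M : Matrix (Fin N) (Fin N) ℝ) (S : Finset ι)
    (f : ι → Fin N → ℝ) : M *ᵥ (∑ j ∈ S, f j) = ∑ j ∈ S, M *ᵥ f j := by
  rw [← Matrix.mulVecLin_apply, map_sum]
  simp [Matrix.mulVecLin_apply]

open Matrix Finset

/-- perturbing a PSD matrix `X₀` whose nonzero eigenvalues are at least `r`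
by a symmetric matrix `E` with `‖E‖_F ≤ r/2` whose addition preserves the kernel of `X₀`
yields a PSD matrix whose nonzero eigenvalues are at least `r/2`. -/
theorem psd_perturbation_eigenvalue_bound
    (N : ℕ) (hN : 1 ≤ N)
    (X₀ E : Matrix (Fin N) (Fin N) ℝ)
    (hX₀sym : X₀.IsSymm) (hEsym : E.IsSymm)
    (hX₀psd : X₀.PosSemidef)
    (r : ℝ) (hr : 0 < r)
    (heig : ∀ lam : ℝ, lam ≠ 0 →
      (∃ v : Fin N → ℝ, v ≠ 0 ∧ X₀.mulVec v = lam • v) → r ≤ lam)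
    (hE : Real.sqrt (∑ i, ∑ j, (E i j) ^ 2) ≤ r / 2)
    (hker : ∀ v : Fin N → ℝ, X₀.mulVec v = 0 → (X₀ + E).mulVec v = 0) :
    (X₀ + E).PosSemidef ∧
    ∀ lam : ℝ, lam ≠ 0 →
      (∃ v : Fin N → ℝ, v ≠ 0 ∧ (X₀ + E).mulVec v = lam • v) → r / 2 ≤ lam := by
  have hH : X₀.IsHermitian := hX₀psd.1
  set u : Fin N → (Fin N → ℝ) := fun j => ⇑(hH.eigenvectorBasis j) with hu
  set μ : Fin N → ℝ := hH.eigenvalues with hμdef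
  have heigv : ∀ j, X₀ *ᵥ u j = μ j • u j := fun j => hH.mulVec_eigenvectorBasis j
  set S : Finset (Fin N) := univ.filter (fun j => μ j ≠ 0) with hSdef
  -- orthonormality
  have horth : ∀ j k, u j ⬝ᵥ u k = if j = k then 1 else 0 := by
    intro j k
    have h := congrFun (congrFun (Unitary.coe_star_mul_self hH.eigenvectorUnitary) j) k
    simpa [Matrix.mul_apply, Matrix.one_apply, Matrix.star_apply, dotProduct, mul_comm] using h
  -- completeness
  have hcompl : ∀ v : Fin N → ℝ, ∑ j, (u j ⬝ᵥ v) • u j = v := by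
    intro v
    funext i
    have h := congrFun (congrFun (Unitary.coe_mul_star_self hH.eigenvectorUnitary) i)
    have hcomm : ∀ k j : Fin N, u j k * v k * u j i = u j i * u j k * v k := by
      intros; ring
    simp only [Finset.sum_apply, Pi.smul_apply, smul_eq_mul, dotProduct, Finset.sum_mul]
    rw [Finset.sum_comm]
    simp_rw [hcomm, ← Finset.sum_mul]
    calc ∑ k, (∑ j, u j i * u j k) * v k
        = ∑ k, (if i = k then 1 else 0) * v k := by
          refine Finset.sum_congr rfl fun k _ => ?_
          have := h k
          simp only [Matrix.mul_apply, Matrix.star_apply, Matrix.one_apply, star_trivial,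
            Matrix.IsHermitian.eigenvectorUnitary_apply] at this
          rw [show (∑ j, u j i * u j k) = (if i = k then 1 else 0) from this]
      _ = v i := by simp
  have hμnn : ∀ j, 0 ≤ μ j := fun j => hX₀psd.eigenvalues_nonneg j
  have hune : ∀ j, u j ≠ 0 := by
    intro j hj
    have := horth j j
    simp [hj] at this
  have hμr : ∀ j, μ j ≠ 0 → r ≤ μ j := fun j hj =>
    heig (μ j) hj ⟨u j, hune j, heigv j⟩
  have hswap : ∀ (a b : Fin N → ℝ), a ⬝ᵥ ((X₀ + E) *ᵥ b) = ((X₀ + E) *ᵥ a) ⬝ᵥ b := by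
    intro a b
    rw [Matrix.dotProduct_mulVec, ← Matrix.mulVec_transpose]
    congr 1
    rw [Matrix.transpose_add, hX₀sym.eq, hEsym.eq]
  -- the key quadratic form bound
  have key : ∀ v : Fin N → ℝ,
      (r / 2) * ∑ j ∈ S, (u j ⬝ᵥ v) ^ 2 ≤ v ⬝ᵥ ((X₀ + E) *ᵥ v) := by
    intro v
    set c : Fin N → ℝ := fun j => u j ⬝ᵥ v with hc
    set w : Fin N → ℝ := ∑ j ∈ S, c j • u j with hw
    set v₀ : Fin N → ℝ := ∑ j ∈ Sᶜ, c j • u j with hv₀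
    have hsplit : v = v₀ + w := by
      rw [hv₀, hw, Finset.sum_compl_add_sum]
      exact (hcompl v).symm
    have hX₀v₀ : X₀ *ᵥ v₀ = 0 := by
      rw [hv₀, mulVec_sum']
      refine Finset.sum_eq_zero fun j hj => ?_
      have hj0 : μ j = 0 := by simpa [hSdef] using hj
      rw [Matrix.mulVec_smul, heigv j, hj0, zero_smul, smul_zero]
    have hMv₀ : (X₀ + E) *ᵥ v₀ = 0 := hker v₀ hX₀v₀
    have hq : v ⬝ᵥ ((X₀ + E) *ᵥ v) = w ⬝ᵥ ((X₀ + E) *ᵥ w) := by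
      rw [hsplit, Matrix.mulVec_add, hMv₀, zero_add, add_dotProduct,
        hswap v₀ w, hMv₀, zero_dotProduct, zero_add]
    have hdotuw : ∀ j, u j ⬝ᵥ w = if j ∈ S then c j else 0 := by
      intro j
      rw [hw, dot_sum_right]
      calc ∑ k ∈ S, u j ⬝ᵥ (c k • u k)
          = ∑ k ∈ S, (if j = k then c k else 0) := by
            refine Finset.sum_congr rfl fun k _ => ?_
            rw [dotProduct_smul, horth j k]
            simp [smul_eq_mul, mul_ite]
        _ = if j ∈ S then c j else 0 := Finset.sum_ite_eq S j c
    have hww : w ⬝ᵥ w = ∑ j ∈ S, c j ^ 2 := by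
      rw [hw, dot_sum_left]
      refine Finset.sum_congr rfl fun j hj => ?_
      rw [smul_dotProduct, ← hw, hdotuw j, if_pos hj]
      simp [sq, smul_eq_mul]
    have hwwnn : 0 ≤ w ⬝ᵥ w := by
      rw [hww]; exact Finset.sum_nonneg fun j _ => sq_nonneg _
    have hwX : w ⬝ᵥ (X₀ *ᵥ w) = ∑ j ∈ S, μ j * c j ^ 2 := by
      have hXw : X₀ *ᵥ w = ∑ j ∈ S, (c j * μ j) • u j := by
        rw [hw, mulVec_sum']
        refine Finset.sum_congr rfl fun j hj => ?_
        rw [Matrix.mulVec_smul, heigv j, smul_smul]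
      rw [hXw, dot_sum_right]
      refine Finset.sum_congr rfl fun j hj => ?_
      rw [dotProduct_smul, dotProduct_comm, hdotuw j, if_pos hj]
      simp [smul_eq_mul]; ring
    have hEbound : -((r / 2) * (w ⬝ᵥ w)) ≤ w ⬝ᵥ (E *ᵥ w) := by
      have h1 := quad_form_abs_le E w
      have h2 : |w ⬝ᵥ (E *ᵥ w)| ≤ (r / 2) * (w ⬝ᵥ w) :=
        h1.trans (mul_le_mul_of_nonneg_right hE hwwnn)
      linarith [neg_abs_le (w ⬝ᵥ (E *ᵥ w))]
    have hXbound : r * ∑ j ∈ S, c j ^ 2 ≤ w ⬝ᵥ (X₀ *ᵥ w) := by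
      rw [hwX, Finset.mul_sum]
      refine Finset.sum_le_sum fun j hj => ?_
      have : μ j ≠ 0 := by simpa [hSdef] using hj
      exact mul_le_mul_of_nonneg_right (hμr j this) (sq_nonneg _)
    have hexp : w ⬝ᵥ ((X₀ + E) *ᵥ w) = w ⬝ᵥ (X₀ *ᵥ w) + w ⬝ᵥ (E *ᵥ w) := by
      rw [Matrix.add_mulVec, dotProduct_add]
    rw [hq, hexp]
    have := hww
    nlinarith [hXbound, hEbound, hwwnn]
  -- PSD
  have hherm : (X₀ + E).IsHermitian := by
    rw [Matrix.IsHermitian, Matrix.conjTranspose_eq_transpose_of_trivial,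
      Matrix.transpose_add, hX₀sym.eq, hEsym.eq]
  have hpsd : (X₀ + E).PosSemidef := by
    refine Matrix.posSemidef_iff_dotProduct_mulVec.2 ⟨hherm, fun x => ?_⟩
    have h1 : (0:ℝ) ≤ (r / 2) * ∑ j ∈ S, (u j ⬝ᵥ x) ^ 2 := by positivity
    simpa using h1.trans (key x)
  refine ⟨hpsd, ?_⟩
  rintro lam hlam ⟨v, hv0, hvv⟩
  have hcz : ∀ j, j ∉ S → u j ⬝ᵥ v = 0 := by
    intro j hj
    have hj0 : μ j = 0 := by simpa [hSdef] using hj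
    have hXu : X₀ *ᵥ u j = 0 := by rw [heigv j, hj0, zero_smul]
    have hMu : (X₀ + E) *ᵥ u j = 0 := hker _ hXu
    have h2 : lam * (u j ⬝ᵥ v) = 0 := by
      have h1 : u j ⬝ᵥ ((X₀ + E) *ᵥ v) = 0 := by
        rw [hswap, hMu, zero_dotProduct]
      rw [hvv, dotProduct_smul] at h1
      simpa [smul_eq_mul] using h1
    exact (mul_eq_zero.1 h2).resolve_left hlam
  have hpars : v ⬝ᵥ v = ∑ j, (u j ⬝ᵥ v) ^ 2 := by
    nth_rw 1 [← hcompl v]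
    rw [dot_sum_left]
    refine Finset.sum_congr rfl fun j _ => ?_
    rw [smul_dotProduct]
    simp [sq, smul_eq_mul]
  have hparsS : v ⬝ᵥ v = ∑ j ∈ S, (u j ⬝ᵥ v) ^ 2 := by
    rw [hpars, ← Finset.sum_subset (Finset.subset_univ S)]
    intro x _ hx
    rw [hcz x hx]
    simp
  have hvvrfl : v ⬝ᵥ v = ∑ i, v i * v i := rfl
  have hvvnn : 0 ≤ v ⬝ᵥ v := by
    rw [hvvrfl]; exact Finset.sum_nonneg fun i _ => mul_self_nonneg _
  have hvvne : v ⬝ᵥ v ≠ 0 := by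
    intro h0
    apply hv0
    funext i
    rw [hvvrfl] at h0
    have := (Finset.sum_eq_zero_iff_of_nonneg (fun i _ => mul_self_nonneg (v i))).1 h0 i
      (Finset.mem_univ i)
    exact mul_self_eq_zero.1 this
  have hvvpos : 0 < v ⬝ᵥ v := lt_of_le_of_ne hvvnn (Ne.symm hvvne)
  have hkey := key v
  rw [hvv, dotProduct_smul, smul_eq_mul, ← hparsS] at hkey
  exact le_of_mul_le_mul_right (by linarith [hkey]) hvvpos
end
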